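/- arXiv:2010.13937 — 12 statements merged into one kernel-verified Lean document; each statement's English description precedes it below -/
import Mathlib

section
/- Let π be a probability measure on [0,∞)² such that there is no vector v ∈ ℝ² with the property that π-almost every a ∈ [0,∞)² is a scalar multiple of v. Then for every x ∈ ℝ² with x₁ > 0 and x₂ > 0, the 2×2 real matrix M with entries M_{ij} = ∫ aᵢ aⱼ exp(-(a₁x₁ + a₂x₂)) dπ(a₁,a₂) (i,j ∈ {1,2}) is positive definite. (Consequently the Hessian of the SARA utility U(x;π) = -∫ exp(-(a₁x₁+a₂x₂)) dπ(a), which equals -M, is negative definite everywhere on the open positive orthant.) -/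
/-!
For `v ≠ 0`, `vᵀ M v = ∫ (v₁a₁ + v₂a₂)² exp(-(a₁x₁ + a₂x₂)) dπ(a) ≥ 0`, and since the weight is
positive this vanishes only if `π`-almost every `a` lies on the line `v ⬝ a = 0`, i.e. is a
multiple of `(-v₂, v₁)`. The integrals are finite because `aᵢ exp(-(a₁x₁ + a₂x₂)/2) ≤ 2 / xᵢ`
on the quadrant, so each integrand is a product of two bounded functions.
-/

open MeasureTheory Matrix

section Gram

variable {Ω n : Type*} [MeasurableSpace Ω] [Fintype n] {μ : Measure Ω} {φ : Ω → n → ℝ} {w : Ω → ℝ}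

lemma sq_dotProduct_mul_eq_sum (v x : n → ℝ) (c : ℝ) :
    (v ⬝ᵥ x) ^ 2 * c = ∑ i, v i * ∑ j, x i * x j * c * v j := by
  simp only [dotProduct, sq, Finset.sum_mul, Finset.mul_sum]
  refine Finset.sum_congr rfl fun i _ => Finset.sum_congr rfl fun j _ => ?_
  ring

lemma integrable_sq_dotProduct_mul
    (hint : ∀ i j, Integrable (fun a => φ a i * φ a j * w a) μ) (v : n → ℝ) :
    Integrable (fun a => (v ⬝ᵥ φ a) ^ 2 * w a) μ := by
  simp_rw [sq_dotProduct_mul_eq_sum]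
  exact integrable_finsetSum _ fun i _ =>
    (integrable_finsetSum _ fun j _ => (hint i j).mul_const _).const_mul _

lemma integral_sq_dotProduct_mul
    (hint : ∀ i j, Integrable (fun a => φ a i * φ a j * w a) μ) (v : n → ℝ) :
    ∫ a, (v ⬝ᵥ φ a) ^ 2 * w a ∂μ
      = star v ⬝ᵥ (of (fun i j => ∫ a, φ a i * φ a j * w a ∂μ) *ᵥ v) := by
  simp_rw [sq_dotProduct_mul_eq_sum]
  rw [integral_finsetSum _ fun i _ =>
    (integrable_finsetSum _ fun j _ => (hint i j).mul_const _).const_mul _]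
  refine Finset.sum_congr rfl fun i _ => ?_
  rw [integral_const_mul, integral_finsetSum _ fun j _ => (hint i j).mul_const _]
  simp_rw [integral_mul_const]
  rfl

theorem posDef_of_integral_mul_mul
    (hw : ∀ᵐ a ∂μ, 0 < w a)
    (hint : ∀ i j, Integrable (fun a => φ a i * φ a j * w a) μ)
    (hspan : ∀ v : n → ℝ, v ≠ 0 → ¬ ∀ᵐ a ∂μ, v ⬝ᵥ φ a = 0) :
    (of fun i j => ∫ a, φ a i * φ a j * w a ∂μ).PosDef := by
  refine posDef_iff_dotProduct_mulVec.2 ⟨?_, fun v hv => ?_⟩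
  · ext i j
    simp only [conjTranspose_apply, of_apply, star_trivial, mul_comm (φ _ j)]
  · rw [← integral_sq_dotProduct_mul hint]
    have hnonneg : 0 ≤ᵐ[μ] fun a => (v ⬝ᵥ φ a) ^ 2 * w a := by
      filter_upwards [hw] with a ha using by positivity
    refine (integral_nonneg_of_ae hnonneg).lt_of_ne fun h => hspan v hv ?_
    filter_upwards [(integral_eq_zero_iff_of_nonneg_ae hnonneg
      (integrable_sq_dotProduct_mul hint v)).1 h.symm, hw] with a ha hwa
    simpa [hwa.ne'] using ha

end Gram

lemma mul_exp_neg_le_inv {t c s : ℝ} (ht : 0 ≤ t) (hc : 0 < c) (hs : c * t ≤ s) :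
    t * Real.exp (-s) ≤ c⁻¹ := by
  calc t * Real.exp (-s) ≤ t * Real.exp (-(c * t)) := by gcongr
    _ = c⁻¹ * ((c * t) * Real.exp (-(c * t))) := by field_simp
    _ ≤ c⁻¹ := by
        refine mul_le_of_le_one_right (by positivity) ?_
        exact (Real.mul_exp_neg_le_exp_neg_one _).trans (by simp)

lemma coord_mul_exp_neg_half_le {a x : ℝ × ℝ} (ha₁ : 0 ≤ a.1) (ha₂ : 0 ≤ a.2)
    (hx₁ : 0 < x.1) (hx₂ : 0 < x.2) (i : Fin 2) :
    ‖![a.1, a.2] i * Real.exp (-((a.1 * x.1 + a.2 * x.2) / 2))‖ ≤ 2 / x.1 + 2 / x.2 := by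
  have h₁ : a.1 * Real.exp (-((a.1 * x.1 + a.2 * x.2) / 2)) ≤ 2 / x.1 := by
    simpa using mul_exp_neg_le_inv ha₁ (half_pos hx₁) (by nlinarith)
  have h₂ : a.2 * Real.exp (-((a.1 * x.1 + a.2 * x.2) / 2)) ≤ 2 / x.2 := by
    simpa using mul_exp_neg_le_inv ha₂ (half_pos hx₂) (by nlinarith)
  fin_cases i
  · show ‖a.1 * _‖ ≤ _
    rw [Real.norm_of_nonneg (by positivity)]
    linarith [div_pos two_pos hx₂]
  · show ‖a.2 * _‖ ≤ _
    rw [Real.norm_of_nonneg (by positivity)]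
    linarith [div_pos two_pos hx₁]

lemma integrable_coord_mul_coord_mul_exp_neg {π : Measure (ℝ × ℝ)} [IsFiniteMeasure π]
    (hπ : ∀ᵐ a ∂π, 0 ≤ a.1 ∧ 0 ≤ a.2) {x : ℝ × ℝ} (hx₁ : 0 < x.1) (hx₂ : 0 < x.2)
    (i j : Fin 2) :
    Integrable (fun a : ℝ × ℝ => ![a.1, a.2] i * ![a.1, a.2] j
      * Real.exp (-(a.1 * x.1 + a.2 * x.2))) π := by
  have hsplit : ∀ a : ℝ × ℝ, ![a.1, a.2] i * ![a.1, a.2] j * Real.exp (-(a.1 * x.1 + a.2 * x.2))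
      = (![a.1, a.2] i * Real.exp (-((a.1 * x.1 + a.2 * x.2) / 2)))
        * (![a.1, a.2] j * Real.exp (-((a.1 * x.1 + a.2 * x.2) / 2))) := by
    intro a
    rw [mul_mul_mul_comm, ← Real.exp_add]
    ring_nf
  simp_rw [hsplit]
  have hcont : ∀ k : Fin 2, Continuous fun a : ℝ × ℝ =>
      ![a.1, a.2] k * Real.exp (-((a.1 * x.1 + a.2 * x.2) / 2)) := by
    intro k
    fin_cases k <;> simp only [Fin.zero_eta, Fin.mk_one, cons_val_zero, cons_val_one] <;> fun_prop
  refine Integrable.of_bound ((hcont i).mul (hcont j)).aestronglyMeasurable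
    ((2 / x.1 + 2 / x.2) * (2 / x.1 + 2 / x.2)) ?_
  filter_upwards [hπ] with a ha
  rw [norm_mul]
  exact mul_le_mul (coord_mul_exp_neg_half_le ha.1 ha.2 hx₁ hx₂ i)
    (coord_mul_exp_neg_half_le ha.1 ha.2 hx₁ hx₂ j) (norm_nonneg _) (by positivity)

lemma exists_eq_smul_of_dotProduct_eq_zero {v : Fin 2 → ℝ} (hv : v ≠ 0) {a : ℝ × ℝ}
    (ha : v ⬝ᵥ ![a.1, a.2] = 0) : ∃ c : ℝ, a = c • (-v 1, v 0) := by
  simp only [dotProduct, Fin.sum_univ_two, cons_val_zero, cons_val_one] at ha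
  by_cases h₁ : v 1 = 0
  · have h₀ : v 0 ≠ 0 := fun h₀ => hv (funext fun i => by fin_cases i <;> simp [h₀, h₁])
    refine ⟨a.2 / v 0, Prod.ext ?_ ?_⟩
    · simpa [h₁, h₀] using ha
    · simp [h₀]
  · refine ⟨-(a.1 / v 1), Prod.ext ?_ ?_⟩
    · simp [h₁]
    · simp only [Prod.smul_mk, smul_eq_mul]
      field_simp
      linarith

/-- Hessian part of Proposition 1: if `π` is a probability measure on `[0,∞)²` that is not
concentrated on a single ray, then for every `x` in the open positive orthant the matrix
`M_{ij} = ∫ aᵢaⱼ exp(-(a₁x₁+a₂x₂)) dπ(a)` is positive definite (so the Hessian `-M` of the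
SARA utility is negative definite). -/
theorem sara_hessian_posDef (π : Measure (ℝ × ℝ)) [IsProbabilityMeasure π]
    (hsupp : π {a : ℝ × ℝ | 0 ≤ a.1 ∧ 0 ≤ a.2} = 1)
    (hray : ¬ ∃ v : ℝ × ℝ, ∀ᵐ a ∂π, ∃ c : ℝ, a = c • v)
    (x : ℝ × ℝ) (hx1 : 0 < x.1) (hx2 : 0 < x.2) :
    Matrix.PosDef (Matrix.of fun i j : Fin 2 =>
      ∫ a, (![a.1, a.2] i) * (![a.1, a.2] j)
        * Real.exp (-(a.1 * x.1 + a.2 * x.2)) ∂π) := by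
  have hquadrant : MeasurableSet {a : ℝ × ℝ | 0 ≤ a.1 ∧ 0 ≤ a.2} :=
    (measurableSet_le measurable_const measurable_fst).inter
      (measurableSet_le measurable_const measurable_snd)
  have hπ : ∀ᵐ a ∂π, 0 ≤ a.1 ∧ 0 ≤ a.2 :=
    (ae_iff_measure_eq hquadrant.nullMeasurableSet).2 (by rw [hsupp, measure_univ])
  refine posDef_of_integral_mul_mul (φ := fun a : ℝ × ℝ => ![a.1, a.2])
    (ae_of_all _ fun a => Real.exp_pos _) (integrable_coord_mul_coord_mul_exp_neg hπ hx1 hx2)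
    fun v hv hzero => hray ⟨(-v 1, v 0), ?_⟩
  filter_upwards [hzero] with a ha using exists_eq_smul_of_dotProduct_eq_zero hv ha
end

section
/- Let π be a probability measure on [0,∞)² with bounded support, let p > 0 and y > 0 be reals, and suppose π({a : a₁ ≠ p·a₂}) > 0. Then the function h : ℝ → ℝ defined by h(t) = ∫ (a₁ - p·a₂) · exp(-(a₁ - p·a₂)·t) · exp(-a₂·y) dπ(a₁,a₂) is strictly antitone (strictly decreasing); in particular, h has at most one zero. -/
/-!
For fixed `a`, with `u = a₁ - p a₂`, the integrand `t ↦ u e^{-ut} e^{-a₂ y}` is non-increasing,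
and strictly decreasing when `u ≠ 0`; since this happens on a set of positive mass, the integral
is strictly decreasing. Bounded support puts `π` on a compact box, where the continuous integrand
is bounded, so every integral is finite.
-/

open MeasureTheory Set

theorem ContinuousOn.integrable_of_ae_mem_compact {X : Type*} [TopologicalSpace X]
    [MeasurableSpace X] [OpensMeasurableSpace X] [T2Space X] {μ : Measure X}
    [IsFiniteMeasureOnCompacts μ] {f : X → ℝ} {K : Set X} (hK : IsCompact K)
    (hf : ContinuousOn f K) (hae : ∀ᵐ x ∂μ, x ∈ K) : Integrable f μ := by
  rw [← Measure.restrict_eq_self_of_ae_mem hae]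
  exact hf.integrableOn_compact hK

theorem strictAnti_integral_of_antitone {α ι : Type*} [MeasurableSpace α] [Preorder ι]
    {μ : Measure α} {f : ι → α → ℝ} {S : Set α} (hint : ∀ i, Integrable (f i) μ)
    (hanti : ∀ x, Antitone (f · x)) (hstrict : ∀ x ∈ S, StrictAnti (f · x)) (hS : 0 < μ S) :
    StrictAnti fun i => ∫ x, f i x ∂μ := by
  intro i j hij
  have hdiff_pos : ∀ x ∈ S, 0 < f i x - f j x := fun x hx => sub_pos.2 (hstrict x hx hij)
  have hdiff_nonneg : 0 ≤ fun x => f i x - f j x := fun x => sub_nonneg.2 (hanti x hij.le)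
  have hint_diff : Integrable (fun x => f i x - f j x) μ := (hint i).sub (hint j)
  have : 0 < ∫ x, f i x - f j x ∂μ := by
    rw [integral_pos_iff_support_of_nonneg hdiff_nonneg hint_diff]
    exact hS.trans_le (measure_mono fun x hx => (hdiff_pos x hx).ne')
  rw [integral_sub (hint i) (hint j)] at this
  exact sub_pos.1 this

namespace Real

theorem strictAnti_mul_exp_neg_mul {u : ℝ} (hu : u ≠ 0) :
    StrictAnti fun t => u * exp (-(u * t)) := by
  intro t₁ t₂ ht
  rcases hu.lt_or_gt with hneg | hpos
  · exact mul_lt_mul_of_neg_left (exp_lt_exp.2 (by nlinarith)) hneg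
  · exact mul_lt_mul_of_pos_left (exp_lt_exp.2 (by nlinarith)) hpos

theorem antitone_mul_exp_neg_mul (u : ℝ) : Antitone fun t => u * exp (-(u * t)) := by
  rcases eq_or_ne u 0 with rfl | hu
  · simp [antitone_const]
  · exact (strictAnti_mul_exp_neg_mul hu).antitone

end Real

theorem sara_foc_strictAnti_general (π : Measure (ℝ × ℝ)) [IsProbabilityMeasure π]
    (hsupp : π {a : ℝ × ℝ | 0 ≤ a.1 ∧ 0 ≤ a.2} = 1)
    (hbdd : ∃ C : ℝ, π {a : ℝ × ℝ | a.1 ≤ C ∧ a.2 ≤ C} = 1)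
    (p y : ℝ)
    (hne : 0 < π {a : ℝ × ℝ | a.1 ≠ p * a.2})
    (h : ℝ → ℝ)
    (hh : ∀ t : ℝ, h t =
      ∫ a, (a.1 - p * a.2) * Real.exp (-((a.1 - p * a.2) * t)) * Real.exp (-(a.2 * y)) ∂π) :
    StrictAnti h ∧ ∀ t₁ t₂ : ℝ, h t₁ = 0 → h t₂ = 0 → t₁ = t₂ := by
  obtain ⟨C, hC⟩ := hbdd
  have hae_mem : ∀ {s : Set (ℝ × ℝ)}, IsClosed s → π s = 1 → ∀ᵐ a ∂π, a ∈ s := fun hs h1 =>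
    (ae_mem_iff_measure_eq hs.measurableSet.nullMeasurableSet).2 (by rw [h1, measure_univ])
  have hbox : ∀ᵐ a ∂π, a ∈ Icc ((0 : ℝ), (0 : ℝ)) (C, C) := by
    filter_upwards [hae_mem (isClosed_le continuous_const continuous_fst |>.inter
        (isClosed_le continuous_const continuous_snd)) hsupp,
      hae_mem (isClosed_le continuous_fst continuous_const |>.inter
        (isClosed_le continuous_snd continuous_const)) hC] with a hge hle
    exact ⟨⟨hge.1, hge.2⟩, ⟨hle.1, hle.2⟩⟩
  have hanti : StrictAnti h := by
    rw [show h = _ from funext hh]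
    exact strictAnti_integral_of_antitone
      (fun t => (by fun_prop : Continuous _).continuousOn.integrable_of_ae_mem_compact
        isCompact_Icc hbox)
      (fun a => (Real.antitone_mul_exp_neg_mul _).mul_const (Real.exp_pos _).le)
      (fun a ha => (Real.strictAnti_mul_exp_neg_mul (sub_ne_zero.2 ha)).mul_const
        (Real.exp_pos _)) hne
  exact ⟨hanti, fun t₁ t₂ h₁ h₂ => hanti.injective (h₁.trans h₂.symm)⟩

/-- The first-order-condition function of the SARA model,
`h(t) = ∫ (a₁ - p a₂) exp(-(a₁ - p a₂)t) exp(-a₂ y) dπ(a)`, is strictly decreasing when `π`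
is a compactly supported probability measure on `[0,∞)²` with `π({a₁ ≠ p a₂}) > 0`;
in particular it has at most one zero. -/
theorem sara_foc_strictAnti (π : Measure (ℝ × ℝ)) [IsProbabilityMeasure π]
    (hsupp : π {a : ℝ × ℝ | 0 ≤ a.1 ∧ 0 ≤ a.2} = 1)
    (hbdd : ∃ C : ℝ, π {a : ℝ × ℝ | a.1 ≤ C ∧ a.2 ≤ C} = 1)
    (p y : ℝ) (hp : 0 < p) (hy : 0 < y)
    (hne : 0 < π {a : ℝ × ℝ | a.1 ≠ p * a.2})
    (h : ℝ → ℝ)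
    (hh : ∀ t : ℝ, h t =
      ∫ a, (a.1 - p * a.2) * Real.exp (-((a.1 - p * a.2) * t)) * Real.exp (-(a.2 * y)) ∂π) :
    StrictAnti h ∧ ∀ t₁ t₂ : ℝ, h t₁ = 0 → h t₂ = 0 → t₁ = t₂ :=
  sara_foc_strictAnti_general π hsupp hbdd p y hne h hh
end

section
/- Let Φ₁, Φ₂, Φ₁*, Φ₂* : ℝ → (0,∞) be differentiable functions with Φⱼ(0) = Φⱼ*(0) = 1 for j = 1,2, and suppose the logarithmic derivatives (log Φⱼ)'(t) and (log Φⱼ*)'(t) are strictly negative for all t ≥ 0 and j = 1,2. Then the following are equivalent: (a) for all x₁, x₂ ≥ 0, (log Φ₁)'(x₁) · (log Φ₂*)'(x₂) = (log Φ₁*)'(x₁) · (log Φ₂)'(x₂); (b) there exists ν > 0 such that Φ₁*(t) = Φ₁(t)^ν and Φ₂*(t) = Φ₂(t)^ν for all t ≥ 0. -/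
/-!
Condition (a) says that the log-derivatives `a = (log Φ₁)'`, `b = (log Φ₂)'` and their starred
versions satisfy `a x₁ · b* x₂ = a* x₁ · b x₂`. Since `a 0` and `b 0` do not vanish, this
separable equation holds exactly when `a* = ν a` and `b* = ν b` for one constant `ν`, which is
positive because `a 0` and `a* 0` are both negative. Integrating from `0`, where all four
functions equal `1`, turns `(log Φⱼ*)' = ν (log Φⱼ)'` into `Φⱼ* = Φⱼ ^ ν`.
-/

open Set

theorem mul_eq_mul_iff_exists_proportional {α β K : Type*} [Field K] {s : Set α} {t : Set β}
    {a a' : α → K} {b b' : β → K} {x₀ : α} {y₀ : β} (hx₀ : x₀ ∈ s) (hy₀ : y₀ ∈ t)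
    (ha : a x₀ ≠ 0) (hb : b y₀ ≠ 0) :
    (∀ x y, x ∈ s → y ∈ t → a x * b' y = a' x * b y) ↔
      ∃ ν, (∀ x, x ∈ s → a' x = ν * a x) ∧ ∀ y, y ∈ t → b' y = ν * b y := by
  constructor
  · intro h
    refine ⟨a' x₀ / a x₀, fun x hx => ?_, fun y hy => ?_⟩
    · have hx : a' x * a x₀ = a' x₀ * a x := by
        refine mul_right_cancel₀ hb ?_
        linear_combination a x * h x₀ y₀ hx₀ hy₀ - a x₀ * h x y₀ hx hy₀
      field_simp
      linear_combination hx
    · field_simp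
      linear_combination h x₀ y hx₀ hy
  · rintro ⟨ν, ha', hb'⟩ x y hx hy
    rw [ha' x hx, hb' y hy]
    ring

theorem eqOn_Ici_iff_deriv_eqOn_Ici {f g : ℝ → ℝ} {a : ℝ}
    (hf : ∀ t, a ≤ t → DifferentiableAt ℝ f t) (hg : ∀ t, a ≤ t → DifferentiableAt ℝ g t)
    (ha : f a = g a) :
    (∀ t, a ≤ t → f t = g t) ↔ ∀ t, a ≤ t → deriv f t = deriv g t := by
  constructor
  · intro h t ht
    have hu : UniqueDiffWithinAt ℝ (Ici a) t := uniqueDiffOn_Ici a t ht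
    rw [← (hf t ht).derivWithin hu, ← (hg t ht).derivWithin hu]
    exact derivWithin_congr h (h t ht)
  · intro h t ht
    refine eq_of_has_deriv_right_eq (a := a) (b := t) (f' := deriv f) (fun x hx => ?_)
      (fun x hx => ?_) (fun x hx => (hf x hx.1).continuousAt.continuousWithinAt)
      (fun x hx => (hg x hx.1).continuousAt.continuousWithinAt) ha t (right_mem_Icc.2 ht)
    · exact (hf x hx.1).hasDerivAt.hasDerivWithinAt
    · rw [h x hx.1]
      exact (hg x hx.1).hasDerivAt.hasDerivWithinAt

theorem eqOn_Ici_rpow_iff_deriv_log {Φ Ψ : ℝ → ℝ} (hΦ : Differentiable ℝ Φ)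
    (hΨ : Differentiable ℝ Ψ) (hΦpos : ∀ t, 0 < Φ t) (hΨpos : ∀ t, 0 < Ψ t)
    (hΦ0 : Φ 0 = 1) (hΨ0 : Ψ 0 = 1) (ν : ℝ) :
    (∀ t, 0 ≤ t → Ψ t = Φ t ^ ν) ↔
      ∀ t, 0 ≤ t → deriv (fun s => Real.log (Ψ s)) t = ν * deriv (fun s => Real.log (Φ s)) t := by
  have hlogΦ t : DifferentiableAt ℝ (fun s => Real.log (Φ s)) t :=
    (hΦ t).log (hΦpos t).ne'
  have hlogΨ t : DifferentiableAt ℝ (fun s => Real.log (Ψ s)) t :=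
    (hΨ t).log (hΨpos t).ne'
  have hlog_iff t : Ψ t = Φ t ^ ν ↔ Real.log (Ψ t) = ν * Real.log (Φ t) := by
    rw [← Real.log_rpow (hΦpos t)]
    exact (Real.log_injOn_pos.eq_iff (hΨpos t) (Real.rpow_pos_of_pos (hΦpos t) ν)).symm
  simp only [hlog_iff, ← deriv_const_mul ν (hlogΦ _)]
  exact eqOn_Ici_iff_deriv_eqOn_Ici (fun t _ => hlogΨ t) (fun t _ => (hlogΦ t).const_mul ν)
    (by simp [hΦ0, hΨ0])

theorem sara_independent_identification_general (Φ₁ Φ₂ Φ₁s Φ₂s : ℝ → ℝ)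
    (hΦ₁ : Differentiable ℝ Φ₁) (hΦ₂ : Differentiable ℝ Φ₂)
    (hΦ₁s : Differentiable ℝ Φ₁s) (hΦ₂s : Differentiable ℝ Φ₂s)
    (hpos₁ : ∀ t : ℝ, 0 < Φ₁ t) (hpos₂ : ∀ t : ℝ, 0 < Φ₂ t)
    (hpos₁s : ∀ t : ℝ, 0 < Φ₁s t) (hpos₂s : ∀ t : ℝ, 0 < Φ₂s t)
    (h0₁ : Φ₁ 0 = 1) (h0₂ : Φ₂ 0 = 1) (h0₁s : Φ₁s 0 = 1) (h0₂s : Φ₂s 0 = 1)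
    (hneg₁ : ∀ t : ℝ, 0 ≤ t → deriv (fun s => Real.log (Φ₁ s)) t < 0)
    (hneg₂ : ∀ t : ℝ, 0 ≤ t → deriv (fun s => Real.log (Φ₂ s)) t < 0)
    (hneg₁s : ∀ t : ℝ, 0 ≤ t → deriv (fun s => Real.log (Φ₁s s)) t < 0) :
    (∀ x₁ x₂ : ℝ, 0 ≤ x₁ → 0 ≤ x₂ →
        deriv (fun s => Real.log (Φ₁ s)) x₁ * deriv (fun s => Real.log (Φ₂s s)) x₂ =
        deriv (fun s => Real.log (Φ₁s s)) x₁ * deriv (fun s => Real.log (Φ₂ s)) x₂) ↔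
      (∃ ν : ℝ, 0 < ν ∧ ∀ t : ℝ, 0 ≤ t → Φ₁s t = Φ₁ t ^ ν ∧ Φ₂s t = Φ₂ t ^ ν) := by
  have hpow₁ := eqOn_Ici_rpow_iff_deriv_log hΦ₁ hΦ₁s hpos₁ hpos₁s h0₁ h0₁s
  have hpow₂ := eqOn_Ici_rpow_iff_deriv_log hΦ₂ hΦ₂s hpos₂ hpos₂s h0₂ h0₂s
  refine (mul_eq_mul_iff_exists_proportional (s := Ici 0) (t := Ici 0) self_mem_Ici
    self_mem_Ici (hneg₁ 0 le_rfl).ne (hneg₂ 0 le_rfl).ne).trans ⟨?_, ?_⟩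
  · rintro ⟨ν, h₁, h₂⟩
    have hν : 0 < ν :=
      pos_of_mul_neg_left (h₁ 0 self_mem_Ici ▸ hneg₁s 0 le_rfl) (hneg₁ 0 le_rfl).le
    exact ⟨ν, hν, fun t ht => ⟨(hpow₁ ν).2 h₁ t ht, (hpow₂ ν).2 h₂ t ht⟩⟩
  · rintro ⟨ν, -, h⟩
    exact ⟨ν, (hpow₁ ν).1 fun t ht => (h t ht).1, (hpow₂ ν).1 fun t ht => (h t ht).2⟩

/-- Proposition 6: under independence, `(Φ₁,Φ₂)` and `(Φ₁*,Φ₂*)` yield the same marginal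
rate of substitution everywhere on the nonnegative orthant if and only if
`Φ₁* = Φ₁^ν` and `Φ₂* = Φ₂^ν` on `[0,∞)` for some `ν > 0`. -/
theorem sara_independent_identification (Φ₁ Φ₂ Φ₁s Φ₂s : ℝ → ℝ)
    (hΦ₁ : Differentiable ℝ Φ₁) (hΦ₂ : Differentiable ℝ Φ₂)
    (hΦ₁s : Differentiable ℝ Φ₁s) (hΦ₂s : Differentiable ℝ Φ₂s)
    (hpos₁ : ∀ t : ℝ, 0 < Φ₁ t) (hpos₂ : ∀ t : ℝ, 0 < Φ₂ t)
    (hpos₁s : ∀ t : ℝ, 0 < Φ₁s t) (hpos₂s : ∀ t : ℝ, 0 < Φ₂s t)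
    (h0₁ : Φ₁ 0 = 1) (h0₂ : Φ₂ 0 = 1) (h0₁s : Φ₁s 0 = 1) (h0₂s : Φ₂s 0 = 1)
    (hneg₁ : ∀ t : ℝ, 0 ≤ t → deriv (fun s => Real.log (Φ₁ s)) t < 0)
    (hneg₂ : ∀ t : ℝ, 0 ≤ t → deriv (fun s => Real.log (Φ₂ s)) t < 0)
    (hneg₁s : ∀ t : ℝ, 0 ≤ t → deriv (fun s => Real.log (Φ₁s s)) t < 0)
    (hneg₂s : ∀ t : ℝ, 0 ≤ t → deriv (fun s => Real.log (Φ₂s s)) t < 0) :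
    (∀ x₁ x₂ : ℝ, 0 ≤ x₁ → 0 ≤ x₂ →
        deriv (fun s => Real.log (Φ₁ s)) x₁ * deriv (fun s => Real.log (Φ₂s s)) x₂ =
        deriv (fun s => Real.log (Φ₁s s)) x₁ * deriv (fun s => Real.log (Φ₂ s)) x₂) ↔
      (∃ ν : ℝ, 0 < ν ∧ ∀ t : ℝ, 0 ≤ t → Φ₁s t = Φ₁ t ^ ν ∧ Φ₂s t = Φ₂ t ^ ν) :=
  sara_independent_identification_general Φ₁ Φ₂ Φ₁s Φ₂s hΦ₁ hΦ₂ hΦ₁s hΦ₂s hpos₁ hpos₂ hpos₁s hpos₂s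
    h0₁ h0₂ h0₁s h0₂s hneg₁ hneg₂ hneg₁s
end

section
/- Let A₁ be a bounded nonnegative random variable, let x₁ ≥ 0, and let S : [0,∞) → (0,1] be continuously differentiable. Define M(t) = E[A₁ · S(x₁ + A₁t)] / E[S(x₁ + A₁t)] for t ≥ 0. Then M(0) = E[A₁], and the right derivative of M at 0 exists and equals (S'(x₁)/S(x₁)) · Var(A₁). -/
/-!
Both `t ↦ E[A S(x₁ + A t)]` and `t ↦ E[S(x₁ + A t)]` may be differentiated under the integral sign,
because `A` is bounded and `S`, `S'` are bounded on a compact neighbourhood of `x₁`. At `t = 0` the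
numerator and denominator are `E[A] S(x₁)` and `S(x₁)`, with derivatives `E[A²] S'(x₁)` and
`E[A] S'(x₁)`, so the quotient rule gives `(S'(x₁)/S(x₁)) (E[A²] - E[A]²)`.
-/

open MeasureTheory ProbabilityTheory Metric

lemma add_mul_mem_closedBall {a C x t t₀ : ℝ} (ha : ‖a‖ ≤ C) (ht : t ∈ ball t₀ 1) :
    x + a * t ∈ closedBall x (C * (‖t₀‖ + 1)) := by
  have ht' : ‖t‖ ≤ ‖t₀‖ + 1 := by
    have := norm_le_norm_add_norm_sub' t t₀
    rw [mem_ball, dist_eq_norm] at ht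
    linarith
  rw [mem_closedBall, dist_eq_norm, add_sub_cancel_left, norm_mul]
  exact mul_le_mul ha ht' (norm_nonneg _) ((norm_nonneg _).trans ha)

lemma hasDerivAt_comp_add_mul {f : ℝ → ℝ} {a x t : ℝ} (hf : DifferentiableAt ℝ f (x + a * t)) :
    HasDerivAt (fun s ↦ f (x + a * s)) (a * deriv f (x + a * t)) t := by
  have hlin : HasDerivAt (fun s ↦ x + a * s) a t := by
    simpa using ((hasDerivAt_id t).const_mul a).const_add x
  simpa [mul_comm, Function.comp_def] using hf.hasDerivAt.comp t hlin

section DerivUnderIntegral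

variable {Ω : Type*} [MeasurableSpace Ω] {μ : Measure Ω} [IsFiniteMeasure μ]
  {A g : Ω → ℝ} {C K : ℝ} {f : ℝ → ℝ}

theorem hasDerivAt_integral_mul_comp_add_mul (hA : AEStronglyMeasurable A μ)
    (hAC : ∀ ω, ‖A ω‖ ≤ C) (hg : AEStronglyMeasurable g μ) (hgK : ∀ ω, ‖g ω‖ ≤ K)
    (hf : ContDiff ℝ 1 f) (x t₀ : ℝ) :
    HasDerivAt (fun t ↦ ∫ ω, g ω * f (x + A ω * t) ∂μ)
      (∫ ω, g ω * (A ω * deriv f (x + A ω * t₀)) ∂μ) t₀ := by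
  have hmem : ∀ ω, ∀ t ∈ ball t₀ 1, x + A ω * t ∈ closedBall x (C * (‖t₀‖ + 1)) :=
    fun ω _ ht ↦ add_mul_mem_closedBall (hAC ω) ht
  obtain ⟨Bf, hBf⟩ := (isCompact_closedBall x (C * (‖t₀‖ + 1))).exists_bound_of_continuousOn
    hf.continuous.continuousOn
  obtain ⟨Bf', hBf'⟩ := (isCompact_closedBall x (C * (‖t₀‖ + 1))).exists_bound_of_continuousOn
    (hf.continuous_deriv le_rfl).continuousOn
  have hmeas : ∀ t, AEStronglyMeasurable (fun ω ↦ g ω * f (x + A ω * t)) μ := fun t ↦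
    hg.mul (hf.continuous.comp_aestronglyMeasurable (aestronglyMeasurable_const.add
      (hA.mul_const t)))
  have hmeas' : AEStronglyMeasurable (fun ω ↦ g ω * (A ω * deriv f (x + A ω * t₀))) μ :=
    hg.mul (hA.mul ((hf.continuous_deriv le_rfl).comp_aestronglyMeasurable
      (aestronglyMeasurable_const.add (hA.mul_const t₀))))
  refine (hasDerivAt_integral_of_dominated_loc_of_deriv_le
    (F' := fun t ω ↦ g ω * (A ω * deriv f (x + A ω * t))) (ball_mem_nhds t₀ one_pos)
    (.of_forall hmeas) (.of_bound (hmeas t₀) (K * Bf) (.of_forall fun ω ↦ ?_)) hmeas'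
    (.of_forall fun ω t ht ↦ ?_) (integrable_const (K * (C * Bf')))
    (.of_forall fun ω t ht ↦ ?_)).2
  · exact norm_mul_le_of_le (hgK ω) (hBf _ (hmem ω t₀ (mem_ball_self one_pos)))
  · exact norm_mul_le_of_le (hgK ω) (norm_mul_le_of_le (hAC ω) (hBf' _ (hmem ω t ht)))
  · exact (hasDerivAt_comp_add_mul (hf.differentiable one_ne_zero _)).const_mul (g ω)

theorem hasDerivAt_integral_mul_comp_add_mul_zero (hA : AEStronglyMeasurable A μ)
    (hAC : ∀ ω, ‖A ω‖ ≤ C) (hg : AEStronglyMeasurable g μ) (hgK : ∀ ω, ‖g ω‖ ≤ K)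
    (hf : ContDiff ℝ 1 f) (x : ℝ) :
    HasDerivAt (fun t ↦ ∫ ω, g ω * f (x + A ω * t) ∂μ) ((∫ ω, g ω * A ω ∂μ) * deriv f x) 0 := by
  simpa only [mul_zero, add_zero, ← mul_assoc, integral_mul_const] using
    hasDerivAt_integral_mul_comp_add_mul hA hAC hg hgK hf x 0

end DerivUnderIntegral

/-- Computational core of Proposition 7: for a bounded nonnegative random variable `A₁`,
`x₁ ≥ 0`, and a continuously differentiable survival function `S` with values in `(0,1]`,
the SSF marginal rate of substitution `M(t) = E[A₁ S(x₁+A₁t)]/E[S(x₁+A₁t)]` satisfies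
`M(0) = E[A₁]` and its right derivative at `0` equals `(S'(x₁)/S(x₁))·Var(A₁)`. -/
theorem ssf_mrs_deriv_at_zero {Ω : Type*} [MeasurableSpace Ω]
    (μ : Measure Ω) [IsProbabilityMeasure μ]
    (A : Ω → ℝ) (hA : Measurable A) (hA0 : ∀ ω, 0 ≤ A ω)
    (hAbdd : ∃ C : ℝ, ∀ ω, A ω ≤ C)
    (x₁ : ℝ) (hx₁ : 0 ≤ x₁)
    (S : ℝ → ℝ) (hS : ContDiff ℝ 1 S)
    (hSrange : ∀ t : ℝ, 0 ≤ t → 0 < S t ∧ S t ≤ 1)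
    (M : ℝ → ℝ)
    (hM : ∀ t : ℝ, M t =
      (∫ ω, A ω * S (x₁ + A ω * t) ∂μ) / (∫ ω, S (x₁ + A ω * t) ∂μ)) :
    M 0 = ∫ ω, A ω ∂μ ∧
      HasDerivWithinAt M
        ((deriv S x₁ / S x₁) * ∫ ω, (A ω - ∫ ω', A ω' ∂μ) ^ 2 ∂μ)
        (Set.Ici 0) 0 := by
  obtain ⟨C, hC⟩ := hAbdd
  have hAC : ∀ ω, ‖A ω‖ ≤ C := fun ω ↦ (Real.norm_of_nonneg (hA0 ω)).trans_le (hC ω)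
  have hSx₁ : S x₁ ≠ 0 := (hSrange x₁ hx₁).1.ne'
  have hnum := hasDerivAt_integral_mul_comp_add_mul_zero (μ := μ) hA.aestronglyMeasurable hAC
    hA.aestronglyMeasurable hAC hS x₁
  have hden : HasDerivAt (fun t ↦ ∫ ω, S (x₁ + A ω * t) ∂μ) ((∫ ω, A ω ∂μ) * deriv S x₁) 0 := by
    simpa only [one_mul] using hasDerivAt_integral_mul_comp_add_mul_zero (g := fun _ ↦ 1)
      hA.aestronglyMeasurable hAC aestronglyMeasurable_const (fun _ ↦ norm_one.le) hS x₁
  have hvar : ∫ ω, (A ω - ∫ ω', A ω' ∂μ) ^ 2 ∂μ = ∫ ω, A ω ^ 2 ∂μ - (∫ ω, A ω ∂μ) ^ 2 := by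
    have hL2 : MemLp A 2 μ := .of_bound hA.aestronglyMeasurable C (.of_forall hAC)
    rw [← variance_eq_integral hA.aemeasurable, variance_eq_sub hL2]
    rfl
  rw [funext hM]
  refine ⟨by simp [integral_mul_const, hSx₁], ?_⟩
  refine (hnum.div hden (by simpa using hSx₁)).hasDerivWithinAt.congr_deriv ?_
  simp only [mul_zero, add_zero, integral_mul_const, integral_const, probReal_univ, one_smul,
    ← pow_two, hvar]
  field_simp
end

section
/- Let ν, α, λ be reals with ν > 0 and λ > 0, and define X₁(y,p) = (1/p)·(y + (α - ν·p)/λ) for y > 0 and p > 0. Then the Slutsky coefficient ∂X₁/∂p (y,p) + X₁(y,p) · ∂X₁/∂y (y,p) equals -ν/(λ·p); in particular it is strictly negative. -/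
/-!
Writing `c = α/λ` and `d = ν/λ`, the demand is `X(y,p) = (y + c)/p - d`. Then
`∂X/∂p = -(y + c)/p²` and `X · ∂X/∂y = (y + c)/p² - d/p`: the income effect cancels the
`(y + c)`-part of the price effect, leaving `-d/p = -ν/(λp)`.
-/

noncomputable def slutsky (X : ℝ → ℝ → ℝ) (y p : ℝ) : ℝ :=
  deriv (fun q => X y q) p + X y p * deriv (fun z => X z p) y

/-- `(y + c)/p - d`, written so that, like `(1/p) * (y + (α - νp)/λ)`, it takes the junk value `0`
at `p = 0`; the two then agree as functions. -/
noncomputable def affineDemand (c d y p : ℝ) : ℝ := (y + c - d * p) / p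

lemma affineDemand_eq_of_ne_zero (c d y : ℝ) {p : ℝ} (hp : p ≠ 0) :
    affineDemand c d y p = (y + c) / p - d := by
  unfold affineDemand
  field_simp

lemma hasDerivAt_affineDemand_price (c d y : ℝ) {p : ℝ} (hp : p ≠ 0) :
    HasDerivAt (affineDemand c d y) (-((y + c) / p ^ 2)) p := by
  have h : HasDerivAt (fun q => (y + c) / q - d) (-((y + c) / p ^ 2)) p := by
    simpa [div_eq_mul_inv] using ((hasDerivAt_inv hp).const_mul (y + c)).sub_const d
  exact h.congr_of_eventuallyEq <| (eventually_ne_nhds hp).mono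
    fun q hq => affineDemand_eq_of_ne_zero c d y hq

lemma hasDerivAt_affineDemand_income (c d p y : ℝ) :
    HasDerivAt (fun z => affineDemand c d z p) (1 / p) y := by
  simpa [affineDemand, div_eq_mul_inv] using
    (((hasDerivAt_id y).add_const c).sub_const (d * p)).mul_const p⁻¹

lemma slutsky_affineDemand (c d y : ℝ) {p : ℝ} (hp : p ≠ 0) :
    slutsky (affineDemand c d) y p = -d / p := by
  rw [slutsky, (hasDerivAt_affineDemand_price c d y hp).deriv,
    (hasDerivAt_affineDemand_income c d p y).deriv, affineDemand_eq_of_ne_zero c d y hp]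
  field_simp
  ring

theorem ssf_slutsky_neg_general (ν α lam : ℝ) (hν : 0 < ν) (hlam : 0 < lam)
    (X : ℝ → ℝ → ℝ) (hX : ∀ y p : ℝ, X y p = (1 / p) * (y + (α - ν * p) / lam))
    (y p : ℝ) (hp : 0 < p) :
    deriv (fun q => X y q) p + X y p * deriv (fun z => X z p) y = -ν / (lam * p) ∧
    deriv (fun q => X y q) p + X y p * deriv (fun z => X z p) y < 0 := by
  have hX_affine : X = affineDemand (α / lam) (ν / lam) := by
    funext z q
    rw [hX, affineDemand]
    field_simp
    ring
  have h_eq : slutsky X y p = -ν / (lam * p) := by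
    rw [hX_affine, slutsky_affineDemand _ _ _ hp.ne', neg_div, div_div, neg_div]
  refine ⟨h_eq, ?_⟩
  rw [← slutsky, h_eq]
  exact div_neg_of_neg_of_pos (neg_neg_of_pos hν) (mul_pos hlam hp)

/-- The Slutsky coefficient of the SSF interior demand
`X₁(y,p) = (1/p)(y + (α - νp)/λ)` equals `-ν/(λp)` and is strictly negative. -/
theorem ssf_slutsky_neg (ν α lam : ℝ) (hν : 0 < ν) (hlam : 0 < lam)
    (X : ℝ → ℝ → ℝ) (hX : ∀ y p : ℝ, X y p = (1 / p) * (y + (α - ν * p) / lam))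
    (y p : ℝ) (hy : 0 < y) (hp : 0 < p) :
    deriv (fun q => X y q) p + X y p * deriv (fun z => X z p) y = -ν / (lam * p) ∧
    deriv (fun q => X y q) p + X y p * deriv (fun z => X z p) y < 0 :=
  ssf_slutsky_neg_general ν α lam hν hlam X hX y p hp
end

section
/- Let f, g, h : ℝ → ℝ be functions with f continuous on [0,∞), f(0) = g(0) = h(0) = 0, and f(x₁ + x₂) + g(x₁) + h(x₂) = 0 for all x₁, x₂ ≥ 0. Then there exists a real number α such that f(x) = α·x, g(x) = -α·x, and h(x) = -α·x for all x ≥ 0. -/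
/-!
Putting `x₂ = 0`, resp. `x₁ = 0`, gives `g = h = -f` on `[0, ∞)`, so `f` is additive there.
Then `F x = f x⁺ - f x⁻` is a continuous additive map `ℝ → ℝ`, hence linear, and it agrees
with `f` on `[0, ∞)`.
-/

section AdditiveOnNonneg

variable {E : Type*} [AddCommGroup E] {f : ℝ → E}

def posNegExtension (f : ℝ → E) (x : ℝ) : E := f x⁺ - f x⁻

theorem map_zero_of_add_of_nonneg (hadd : ∀ a b : ℝ, 0 ≤ a → 0 ≤ b → f (a + b) = f a + f b) :
    f 0 = 0 := by
  simpa using (hadd 0 0 le_rfl le_rfl).symm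

theorem posNegExtension_sub (hadd : ∀ a b : ℝ, 0 ≤ a → 0 ≤ b → f (a + b) = f a + f b)
    {a b : ℝ} (ha : 0 ≤ a) (hb : 0 ≤ b) : posNegExtension f (a - b) = f a - f b := by
  have hsplit : (a - b)⁺ + b = a + (a - b)⁻ := by
    linarith [posPart_sub_negPart (a - b)]
  have := congrArg f hsplit
  rw [hadd _ _ (posPart_nonneg _) hb, hadd _ _ ha (negPart_nonneg _)] at this
  rw [posNegExtension, sub_eq_sub_iff_add_eq_add, this]

theorem posNegExtension_of_nonneg (hadd : ∀ a b : ℝ, 0 ≤ a → 0 ≤ b → f (a + b) = f a + f b)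
    {x : ℝ} (hx : 0 ≤ x) : posNegExtension f x = f x := by
  simpa [map_zero_of_add_of_nonneg hadd] using posNegExtension_sub hadd hx le_rfl

theorem posNegExtension_add (hadd : ∀ a b : ℝ, 0 ≤ a → 0 ≤ b → f (a + b) = f a + f b)
    (x y : ℝ) : posNegExtension f (x + y) = posNegExtension f x + posNegExtension f y := by
  have hxy : x + y = (x⁺ + y⁺) - (x⁻ + y⁻) := by
    linarith [posPart_sub_negPart x, posPart_sub_negPart y]
  rw [hxy, posNegExtension_sub hadd (by positivity) (by positivity),
    hadd _ _ (posPart_nonneg x) (posPart_nonneg y), hadd _ _ (negPart_nonneg x) (negPart_nonneg y),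
    posNegExtension, posNegExtension]
  abel

def posNegExtensionHom (hadd : ∀ a b : ℝ, 0 ≤ a → 0 ≤ b → f (a + b) = f a + f b) : ℝ →+ E where
  toFun := posNegExtension f
  map_zero' := by rw [posNegExtension_of_nonneg hadd le_rfl, map_zero_of_add_of_nonneg hadd]
  map_add' := posNegExtension_add hadd

end AdditiveOnNonneg

section Continuity

variable {E : Type*} [AddCommGroup E] [TopologicalSpace E] [IsTopologicalAddGroup E]
  {f : ℝ → E}

theorem continuous_posNegExtension (hf : ContinuousOn f (Set.Ici 0)) :
    Continuous (posNegExtension f) := by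
  have hpos : Continuous fun x : ℝ => f x⁺ :=
    hf.comp_continuous (continuous_id.sup continuous_const) fun x => posPart_nonneg x
  have hneg : Continuous fun x : ℝ => f x⁻ :=
    hf.comp_continuous (continuous_neg.sup continuous_const) fun x => negPart_nonneg x
  exact hpos.sub hneg

theorem eq_smul_of_continuousOn_of_add_of_nonneg [Module ℝ E] [ContinuousSMul ℝ E] [T2Space E]
    (hf : ContinuousOn f (Set.Ici 0))
    (hadd : ∀ a b : ℝ, 0 ≤ a → 0 ≤ b → f (a + b) = f a + f b) {x : ℝ} (hx : 0 ≤ x) :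
    f x = x • f 1 := by
  have := map_real_smul (posNegExtensionHom hadd) (continuous_posNegExtension hf) x 1
  simpa [posNegExtensionHom, posNegExtension_of_nonneg hadd, hx] using this

end Continuity

theorem pexider_affine_general (f g h : ℝ → ℝ)
    (hf : ContinuousOn f (Set.Ici 0))
    (hg0 : g 0 = 0) (hh0 : h 0 = 0)
    (heq : ∀ x₁ x₂ : ℝ, 0 ≤ x₁ → 0 ≤ x₂ → f (x₁ + x₂) + g x₁ + h x₂ = 0) :
    ∃ α : ℝ, (∀ x : ℝ, 0 ≤ x → f x = α * x) ∧
      (∀ x : ℝ, 0 ≤ x → g x = -(α * x)) ∧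
      (∀ x : ℝ, 0 ≤ x → h x = -(α * x)) := by
  have hg : ∀ x : ℝ, 0 ≤ x → g x = -f x := fun x hx => by
    have := heq x 0 hx le_rfl
    rw [add_zero, hh0] at this
    linarith
  have hh : ∀ x : ℝ, 0 ≤ x → h x = -f x := fun x hx => by
    have := heq 0 x le_rfl hx
    rw [zero_add, hg0] at this
    linarith
  have hadd : ∀ a b : ℝ, 0 ≤ a → 0 ≤ b → f (a + b) = f a + f b := fun a b ha hb => by
    linarith [heq a b ha hb, hg a ha, hh b hb]
  have hlin : ∀ x : ℝ, 0 ≤ x → f x = f 1 * x := fun x hx => by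
    rw [eq_smul_of_continuousOn_of_add_of_nonneg hf hadd hx, smul_eq_mul, mul_comm]
  exact ⟨f 1, hlin, fun x hx => by rw [hg x hx, hlin x hx],
    fun x hx => by rw [hh x hx, hlin x hx]⟩

/-- Pexider-type identification step of Appendix E.1: if `f` is continuous on `[0,∞)`,
`f(0)=g(0)=h(0)=0`, and `f(x₁+x₂)+g(x₁)+h(x₂)=0` for all `x₁,x₂ ≥ 0`, then there is a
real `α` with `f(x)=αx`, `g(x)=-αx`, `h(x)=-αx` on `[0,∞)`. -/
theorem pexider_affine (f g h : ℝ → ℝ)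
    (hf : ContinuousOn f (Set.Ici 0))
    (hf0 : f 0 = 0) (hg0 : g 0 = 0) (hh0 : h 0 = 0)
    (heq : ∀ x₁ x₂ : ℝ, 0 ≤ x₁ → 0 ≤ x₂ → f (x₁ + x₂) + g x₁ + h x₂ = 0) :
    ∃ α : ℝ, (∀ x : ℝ, 0 ≤ x → f x = α * x) ∧
      (∀ x : ℝ, 0 ≤ x → g x = -(α * x)) ∧
      (∀ x : ℝ, 0 ≤ x → h x = -(α * x)) :=
  pexider_affine_general f g h hf hg0 hh0 heq
end

section
/- Let A_c, A₁, A₂ and A_c*, A₁*, A₂* be real random variables, each strictly positive almost surely and each satisfying P(X < ε) > 0 for every ε > 0 (essential infimum equal to 0). Let Ψ denote the Laplace transform, e.g. Ψ_c(x) = E[exp(-A_c·x)]. If Ψ_c(x₁+x₂)·Ψ₁(x₁)·Ψ₂(x₂) = Ψ_c*(x₁+x₂)·Ψ₁*(x₁)·Ψ₂*(x₂) for all x₁, x₂ ≥ 0, then Ψ_c(t) = Ψ_c*(t), Ψ₁(t) = Ψ₁*(t), and Ψ₂(t) = Ψ₂*(t) for all t ≥ 0. -/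
open MeasureTheory Real Filter Topology

/-!
Put `x₂ = 0`, then `x₁ = 0`, in the identity: `Ψ_c Ψ₁ = Ψ_c* Ψ₁*` and `Ψ_c Ψ₂ = Ψ_c* Ψ₂*`.
Dividing the identity by these shows that `h = Ψ_c / Ψ_c*` satisfies `h (x + y) = h x * h y`
on `[0, ∞)`. As `Ψ_c ≤ 1` and `Ψ_c* t ≥ P(A_c* < ε) e^{-ε t}` with `P(A_c* < ε) > 0`, `h` grows
more slowly than every exponential, and `h t ^ n = h (n t)` then forces `h ≤ 1`; by symmetry
`Ψ_c = Ψ_c*`, and cancelling it identifies `Ψ₁` and `Ψ₂`.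
-/

namespace SaraIdentification

theorem le_one_of_map_add_eq_mul {h : ℝ → ℝ} (h0 : h 0 = 1)
    (hadd : ∀ x y, 0 ≤ x → 0 ≤ y → h (x + y) = h x * h y)
    (hbound : ∀ ε > 0, ∃ C, ∀ t, 0 ≤ t → h t ≤ C * exp (ε * t)) {t : ℝ} (ht : 0 ≤ t) :
    h t ≤ 1 := by
  have hpow : ∀ n : ℕ, h (n * t) = h t ^ n := by
    intro n
    induction n with
    | zero => simpa using h0
    | succ n ih => rw [Nat.cast_succ, add_one_mul, hadd _ _ (by positivity) ht, ih, pow_succ]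
  have hexp : ∀ ε > 0, h t ≤ exp (ε * t) := by
    intro ε hε
    obtain ⟨C, hC⟩ := hbound ε hε
    by_contra! hlt
    obtain ⟨n, hn⟩ := pow_unbounded_of_one_lt C ((one_lt_div (exp_pos _)).2 hlt)
    refine hn.not_ge ?_
    rw [div_pow, ← hpow, ← exp_nat_mul, div_le_iff₀ (exp_pos _), mul_left_comm]
    exact hC _ (by positivity)
  have hlim : Tendsto (fun ε ↦ exp (ε * t)) (𝓝[>] 0) (𝓝 1) := by
    simpa using ((continuous_id.mul continuous_const).rexp.tendsto (0 : ℝ)).mono_left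
      nhdsWithin_le_nhds
  exact ge_of_tendsto hlim (eventually_nhdsWithin_of_forall hexp)

def DecaysSubexponentially (G : ℝ → ℝ) : Prop :=
  ∀ ε > 0, ∃ c > 0, ∀ t, 0 ≤ t → c * exp (-(ε * t)) ≤ G t

theorem DecaysSubexponentially.pos {G : ℝ → ℝ} (hG : DecaysSubexponentially G) {t : ℝ}
    (ht : 0 ≤ t) : 0 < G t := by
  obtain ⟨c, hc, hcG⟩ := hG 1 one_pos
  exact (mul_pos hc (exp_pos _)).trans_le (hcG t ht)

theorem le_of_cross_mul_eq {F G : ℝ → ℝ} (hF1 : ∀ t, 0 ≤ t → F t ≤ 1)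
    (hFpos : ∀ t, 0 ≤ t → 0 < F t) (hG : DecaysSubexponentially G)
    (hcross : ∀ x y, 0 ≤ x → 0 ≤ y → F (x + y) * G x * G y = G (x + y) * F x * F y)
    {t : ℝ} (ht : 0 ≤ t) : F t ≤ G t := by
  have hGpos : ∀ s, 0 ≤ s → 0 < G s := fun _ ↦ hG.pos
  have hadd : ∀ x y, 0 ≤ x → 0 ≤ y → F (x + y) / G (x + y) = F x / G x * (F y / G y) := by
    intro x y hx hy
    have := hGpos (x + y) (add_nonneg hx hy)
    have := hGpos x hx
    have := hGpos y hy
    field_simp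
    linear_combination hcross x y hx hy
  have h0 : F 0 / G 0 = 1 := by
    have := hadd 0 0 le_rfl le_rfl
    simp only [add_zero] at this
    have := div_pos (hFpos 0 le_rfl) (hGpos 0 le_rfl)
    nlinarith
  have hbound : ∀ ε > 0, ∃ C, ∀ t, 0 ≤ t → F t / G t ≤ C * exp (ε * t) := by
    intro ε hε
    obtain ⟨c, hc, hcG⟩ := hG ε hε
    refine ⟨c⁻¹, fun s hs ↦ ?_⟩
    rw [div_le_iff₀ (hGpos s hs)]
    calc F s ≤ 1 := hF1 s hs
      _ = c⁻¹ * exp (ε * s) * (c * exp (-(ε * s))) := by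
        rw [exp_neg]; field_simp
      _ ≤ c⁻¹ * exp (ε * s) * G s := by gcongr; exact hcG s hs
  exact (div_le_one (hGpos t ht)).1
    (le_one_of_map_add_eq_mul (h := fun s ↦ F s / G s) h0 hadd hbound ht)

theorem cross_mul_eq_of_mul_eq {F F₁ F₂ G G₁ G₂ : ℝ → ℝ}
    (hF₁0 : F₁ 0 = 1) (hF₂0 : F₂ 0 = 1) (hG₁0 : G₁ 0 = 1) (hG₂0 : G₂ 0 = 1)
    (hF₁ : ∀ t, 0 ≤ t → F₁ t ≠ 0) (hF₂ : ∀ t, 0 ≤ t → F₂ t ≠ 0)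
    (heq : ∀ x y, 0 ≤ x → 0 ≤ y → F (x + y) * F₁ x * F₂ y = G (x + y) * G₁ x * G₂ y)
    {x y : ℝ} (hx : 0 ≤ x) (hy : 0 ≤ y) :
    F (x + y) * G x * G y = G (x + y) * F x * F y := by
  have h₁ := heq x 0 hx le_rfl
  have h₂ := heq 0 y le_rfl hy
  simp only [add_zero, zero_add, hF₁0, hF₂0, hG₁0, hG₂0, mul_one] at h₁ h₂
  refine mul_right_cancel₀ (mul_ne_zero (hF₁ x hx) (hF₂ y hy)) ?_
  linear_combination G x * G y * heq x y hx hy - G (x + y) * (G y * G₂ y * h₁ + F x * F₁ x * h₂)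

theorem eq_of_mul_eq {F F₁ F₂ G G₁ G₂ : ℝ → ℝ}
    (hF1 : ∀ t, 0 ≤ t → F t ≤ 1) (hG1 : ∀ t, 0 ≤ t → G t ≤ 1)
    (hF : DecaysSubexponentially F) (hG : DecaysSubexponentially G)
    (hF₁0 : F₁ 0 = 1) (hF₂0 : F₂ 0 = 1) (hG₁0 : G₁ 0 = 1) (hG₂0 : G₂ 0 = 1)
    (hF₁ : ∀ t, 0 ≤ t → F₁ t ≠ 0) (hF₂ : ∀ t, 0 ≤ t → F₂ t ≠ 0)
    (heq : ∀ x y, 0 ≤ x → 0 ≤ y → F (x + y) * F₁ x * F₂ y = G (x + y) * G₁ x * G₂ y)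
    {t : ℝ} (ht : 0 ≤ t) : F t = G t ∧ F₁ t = G₁ t ∧ F₂ t = G₂ t := by
  have hcross := fun x y hx hy ↦
    cross_mul_eq_of_mul_eq hF₁0 hF₂0 hG₁0 hG₂0 hF₁ hF₂ heq (x := x) (y := y) hx hy
  have hFG : ∀ s, 0 ≤ s → F s = G s := fun s hs ↦ le_antisymm
    (le_of_cross_mul_eq hF1 (fun _ ↦ hF.pos) hG hcross hs)
    (le_of_cross_mul_eq hG1 (fun _ ↦ hG.pos) hF (fun x y hx hy ↦ (hcross x y hx hy).symm) hs)
  have h₁ := heq t 0 ht le_rfl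
  have h₂ := heq 0 t le_rfl ht
  simp only [add_zero, zero_add, hF₁0, hF₂0, hG₁0, hG₂0, mul_one, hFG t ht] at h₁ h₂
  have hG0 := (hG.pos ht).ne'
  exact ⟨hFG t ht, mul_left_cancel₀ hG0 h₁, mul_left_cancel₀ hG0 h₂⟩

theorem exp_neg_mul_le_one {a t : ℝ} (ha : 0 ≤ a) (ht : 0 ≤ t) : exp (-(a * t)) ≤ 1 :=
  exp_le_one_iff.2 (neg_nonpos.2 (mul_nonneg ha ht))

section Laplace

variable {Ω : Type*} [MeasurableSpace Ω] {μ : Measure Ω} {A : Ω → ℝ} {t : ℝ}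

noncomputable def laplace (μ : Measure Ω) (A : Ω → ℝ) (t : ℝ) : ℝ := ∫ ω, exp (-(A ω * t)) ∂μ

theorem integrable_exp_neg_mul [IsFiniteMeasure μ] (hA : AEMeasurable A μ)
    (hA0 : ∀ᵐ ω ∂μ, 0 ≤ A ω) (ht : 0 ≤ t) : Integrable (fun ω ↦ exp (-(A ω * t))) μ := by
  refine Integrable.of_bound (C := 1) (hA.mul_const t).neg.exp.aestronglyMeasurable ?_
  filter_upwards [hA0] with ω hω
  rw [norm_of_nonneg (exp_pos _).le]
  exact exp_neg_mul_le_one hω ht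

@[simp]
theorem laplace_zero [IsProbabilityMeasure μ] : laplace μ A 0 = 1 := by
  simp [laplace]

theorem laplace_pos [IsFiniteMeasure μ] [NeZero μ] (hA : AEMeasurable A μ)
    (hA0 : ∀ᵐ ω ∂μ, 0 ≤ A ω) (ht : 0 ≤ t) : 0 < laplace μ A t :=
  integral_exp_pos (integrable_exp_neg_mul hA hA0 ht)

theorem laplace_le_one [IsProbabilityMeasure μ] (hA0 : ∀ᵐ ω ∂μ, 0 ≤ A ω) (ht : 0 ≤ t) :
    laplace μ A t ≤ 1 := by
  calc laplace μ A t ≤ ‖laplace μ A t‖ := Real.le_norm_self _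
    _ ≤ 1 * μ.real Set.univ := norm_integral_le_of_norm_le_const <| hA0.mono fun ω hω ↦ by
        rw [norm_of_nonneg (exp_pos _).le]; exact exp_neg_mul_le_one hω ht
    _ = 1 := by simp

theorem decaysSubexponentially_laplace [IsFiniteMeasure μ] (hA : AEMeasurable A μ)
    (hA0 : ∀ᵐ ω ∂μ, 0 ≤ A ω) (hinf : ∀ ε : ℝ, 0 < ε → 0 < μ {ω | A ω < ε}) :
    DecaysSubexponentially (laplace μ A) := by
  intro ε hε
  refine ⟨μ.real {ω | A ω < ε}, ENNReal.toReal_pos (hinf ε hε).ne' (measure_ne_top μ _),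
    fun t ht ↦ ?_⟩
  have hsub : {ω | A ω < ε} ⊆ {ω | exp (-(ε * t)) ≤ exp (-(A ω * t))} := fun ω hω ↦ by
    simp only [Set.mem_ofPred_eq, exp_le_exp, neg_le_neg_iff]
    exact mul_le_mul_of_nonneg_right hω.le ht
  calc μ.real {ω | A ω < ε} * exp (-(ε * t))
      ≤ exp (-(ε * t)) * μ.real {ω | exp (-(ε * t)) ≤ exp (-(A ω * t))} := by
        rw [mul_comm]; exact mul_le_mul_of_nonneg_left (measureReal_mono hsub) (exp_pos _).le
    _ ≤ laplace μ A t :=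
        mul_meas_ge_le_integral_of_nonneg (ae_of_all _ fun _ ↦ (exp_pos _).le)
          (integrable_exp_neg_mul hA hA0 ht) _

end Laplace

end SaraIdentification

theorem sara_common_identification_from_utility_general {Ω : Type*} [MeasurableSpace Ω]
    (μ : Measure Ω) [IsProbabilityMeasure μ]
    (Ac A₁ A₂ Acs A₁s A₂s : Ω → ℝ)
    (hAc : Measurable Ac) (hA₁ : Measurable A₁) (hA₂ : Measurable A₂)
    (hAcs : Measurable Acs)
    (hposc : ∀ᵐ ω ∂μ, 0 < Ac ω) (hpos₁ : ∀ᵐ ω ∂μ, 0 < A₁ ω) (hpos₂ : ∀ᵐ ω ∂μ, 0 < A₂ ω)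
    (hposcs : ∀ᵐ ω ∂μ, 0 < Acs ω)
    (hinfc : ∀ ε : ℝ, 0 < ε → 0 < μ {ω | Ac ω < ε})
    (hinfcs : ∀ ε : ℝ, 0 < ε → 0 < μ {ω | Acs ω < ε})
    (heq : ∀ x₁ x₂ : ℝ, 0 ≤ x₁ → 0 ≤ x₂ →
      (∫ ω, Real.exp (-(Ac ω * (x₁ + x₂))) ∂μ) * (∫ ω, Real.exp (-(A₁ ω * x₁)) ∂μ)
          * (∫ ω, Real.exp (-(A₂ ω * x₂)) ∂μ)
        = (∫ ω, Real.exp (-(Acs ω * (x₁ + x₂))) ∂μ)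
          * (∫ ω, Real.exp (-(A₁s ω * x₁)) ∂μ) * (∫ ω, Real.exp (-(A₂s ω * x₂)) ∂μ)) :
    ∀ t : ℝ, 0 ≤ t →
      (∫ ω, Real.exp (-(Ac ω * t)) ∂μ) = (∫ ω, Real.exp (-(Acs ω * t)) ∂μ) ∧
      (∫ ω, Real.exp (-(A₁ ω * t)) ∂μ) = (∫ ω, Real.exp (-(A₁s ω * t)) ∂μ) ∧
      (∫ ω, Real.exp (-(A₂ ω * t)) ∂μ) = (∫ ω, Real.exp (-(A₂s ω * t)) ∂μ) := by
  have hc : ∀ᵐ ω ∂μ, 0 ≤ Ac ω := hposc.mono fun _ ↦ le_of_lt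
  have hcs : ∀ᵐ ω ∂μ, 0 ≤ Acs ω := hposcs.mono fun _ ↦ le_of_lt
  have h₁ : ∀ᵐ ω ∂μ, 0 ≤ A₁ ω := hpos₁.mono fun _ ↦ le_of_lt
  have h₂ : ∀ᵐ ω ∂μ, 0 ≤ A₂ ω := hpos₂.mono fun _ ↦ le_of_lt
  intro t ht
  open SaraIdentification in
  exact eq_of_mul_eq (fun _ ↦ laplace_le_one hc) (fun _ ↦ laplace_le_one hcs)
    (decaysSubexponentially_laplace hAc.aemeasurable hc hinfc)
    (decaysSubexponentially_laplace hAcs.aemeasurable hcs hinfcs)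
    laplace_zero laplace_zero laplace_zero laplace_zero
    (fun _ hs ↦ (laplace_pos hA₁.aemeasurable h₁ hs).ne')
    (fun _ hs ↦ (laplace_pos hA₂.aemeasurable h₂ hs).ne') heq ht

/-- Appendix E.1: if `A_c, A₁, A₂` and `A_c*, A₁*, A₂*` are a.s. strictly positive random
variables with essential infimum 0, and the products of Laplace transforms
`Ψ_c(x₁+x₂)Ψ₁(x₁)Ψ₂(x₂)` agree for all `x₁,x₂ ≥ 0`, then the three Laplace transforms
agree on `[0,∞)`. -/
theorem sara_common_identification_from_utility {Ω : Type*} [MeasurableSpace Ω]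
    (μ : Measure Ω) [IsProbabilityMeasure μ]
    (Ac A₁ A₂ Acs A₁s A₂s : Ω → ℝ)
    (hAc : Measurable Ac) (hA₁ : Measurable A₁) (hA₂ : Measurable A₂)
    (hAcs : Measurable Acs) (hA₁s : Measurable A₁s) (hA₂s : Measurable A₂s)
    (hposc : ∀ᵐ ω ∂μ, 0 < Ac ω) (hpos₁ : ∀ᵐ ω ∂μ, 0 < A₁ ω) (hpos₂ : ∀ᵐ ω ∂μ, 0 < A₂ ω)
    (hposcs : ∀ᵐ ω ∂μ, 0 < Acs ω) (hpos₁s : ∀ᵐ ω ∂μ, 0 < A₁s ω)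
    (hpos₂s : ∀ᵐ ω ∂μ, 0 < A₂s ω)
    (hinfc : ∀ ε : ℝ, 0 < ε → 0 < μ {ω | Ac ω < ε})
    (hinf₁ : ∀ ε : ℝ, 0 < ε → 0 < μ {ω | A₁ ω < ε})
    (hinf₂ : ∀ ε : ℝ, 0 < ε → 0 < μ {ω | A₂ ω < ε})
    (hinfcs : ∀ ε : ℝ, 0 < ε → 0 < μ {ω | Acs ω < ε})
    (hinf₁s : ∀ ε : ℝ, 0 < ε → 0 < μ {ω | A₁s ω < ε})
    (hinf₂s : ∀ ε : ℝ, 0 < ε → 0 < μ {ω | A₂s ω < ε})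
    (heq : ∀ x₁ x₂ : ℝ, 0 ≤ x₁ → 0 ≤ x₂ →
      (∫ ω, Real.exp (-(Ac ω * (x₁ + x₂))) ∂μ) * (∫ ω, Real.exp (-(A₁ ω * x₁)) ∂μ)
          * (∫ ω, Real.exp (-(A₂ ω * x₂)) ∂μ)
        = (∫ ω, Real.exp (-(Acs ω * (x₁ + x₂))) ∂μ)
          * (∫ ω, Real.exp (-(A₁s ω * x₁)) ∂μ) * (∫ ω, Real.exp (-(A₂s ω * x₂)) ∂μ)) :
    ∀ t : ℝ, 0 ≤ t →
      (∫ ω, Real.exp (-(Ac ω * t)) ∂μ) = (∫ ω, Real.exp (-(Acs ω * t)) ∂μ) ∧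
      (∫ ω, Real.exp (-(A₁ ω * t)) ∂μ) = (∫ ω, Real.exp (-(A₁s ω * t)) ∂μ) ∧
      (∫ ω, Real.exp (-(A₂ ω * t)) ∂μ) = (∫ ω, Real.exp (-(A₂s ω * t)) ∂μ) :=
  sara_common_identification_from_utility_general μ Ac A₁ A₂ Acs A₁s A₂s hAc hA₁ hA₂ hAcs hposc
    hpos₁ hpos₂ hposcs hinfc hinfcs heq
end

section
/- Let A be a real random variable with P(A > 0) = 1 and P(A < ε) > 0 for every ε > 0. Then the ratio E[A·exp(-A·x)] / E[exp(-A·x)] tends to 0 as x tends to +∞. -/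
/-!
Fix `δ > 0`. Since `t e^{-t} ≤ 1` for every real `t`, the pointwise bound
`(a - δ) e^{-ax} ≤ e^{-δx} / x` holds for all `a` and `x > 0`; integrating it gives
`E[A e^{-Ax}] ≤ δ E[e^{-Ax}] + e^{-δx} / x`. On the other hand
`E[e^{-Ax}] ≥ e^{-δx} P(A < δ)`, so the tilted mean is at most `δ + 1 / (x P(A < δ))`,
which is below `2δ` for large `x` because `P(A < δ) > 0`.
-/

open MeasureTheory Filter

namespace Real

lemma sub_mul_exp_neg_mul_le_exp_neg_mul_div (a δ : ℝ) {x : ℝ} (hx : 0 < x) :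
    (a - δ) * exp (-(a * x)) ≤ exp (-(δ * x)) / x := by
  have hkey : (a - δ) * x * exp (-((a - δ) * x)) ≤ 1 :=
    (mul_exp_neg_le_exp_neg_one _).trans (exp_le_one_iff.2 (by norm_num))
  have hsplit : exp (-(a * x)) = exp (-((a - δ) * x)) * exp (-(δ * x)) := by
    rw [← exp_add]; ring_nf
  rw [le_div_iff₀ hx, hsplit]
  nlinarith [exp_pos (-(δ * x))]

end Real

section TiltedMean

variable {Ω : Type*} [MeasurableSpace Ω] {μ : Measure Ω} {A : Ω → ℝ}

lemma integrable_exp_neg_mul [IsFiniteMeasure μ] (hA : Measurable A)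
    (hnonneg : ∀ᵐ ω ∂μ, 0 ≤ A ω) {x : ℝ} (hx : 0 ≤ x) :
    Integrable (fun ω => Real.exp (-(A ω * x))) μ := by
  refine (integrable_const (1 : ℝ)).mono' (hA.mul_const x).neg.exp.aestronglyMeasurable ?_
  filter_upwards [hnonneg] with ω hω
  rw [Real.norm_of_nonneg (Real.exp_pos _).le, Real.exp_le_one_iff, neg_nonpos]
  exact mul_nonneg hω hx

lemma integrable_mul_exp_neg_mul [IsFiniteMeasure μ] (hA : Measurable A)
    (hnonneg : ∀ᵐ ω ∂μ, 0 ≤ A ω) {x : ℝ} (hx : 0 < x) :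
    Integrable (fun ω => A ω * Real.exp (-(A ω * x))) μ := by
  refine (integrable_const (1 / x)).mono'
    (hA.mul (hA.mul_const x).neg.exp).aestronglyMeasurable ?_
  filter_upwards [hnonneg] with ω hω
  rw [Real.norm_of_nonneg (mul_nonneg hω (Real.exp_pos _).le)]
  simpa using Real.sub_mul_exp_neg_mul_le_exp_neg_mul_div (A ω) 0 hx

lemma exp_neg_mul_mul_measureReal_le_integral [IsFiniteMeasure μ] (hA : Measurable A)
    (hnonneg : ∀ᵐ ω ∂μ, 0 ≤ A ω) (δ : ℝ) {x : ℝ} (hx : 0 ≤ x) :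
    Real.exp (-(δ * x)) * μ.real {ω | A ω < δ} ≤ ∫ ω, Real.exp (-(A ω * x)) ∂μ := by
  have hint := integrable_exp_neg_mul hA hnonneg hx
  calc Real.exp (-(δ * x)) * μ.real {ω | A ω < δ}
      ≤ ∫ ω in {ω | A ω < δ}, Real.exp (-(A ω * x)) ∂μ := by
        refine setIntegral_ge_of_const_le_real (hA measurableSet_Iio) (measure_ne_top μ _)
          (fun ω hω => ?_) hint.integrableOn
        exact Real.exp_le_exp.2 (neg_le_neg (mul_le_mul_of_nonneg_right (le_of_lt hω) hx))
    _ ≤ ∫ ω, Real.exp (-(A ω * x)) ∂μ :=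
        setIntegral_le_integral hint (ae_of_all _ fun _ => (Real.exp_pos _).le)

lemma integral_mul_exp_neg_mul_le [IsProbabilityMeasure μ] (hA : Measurable A)
    (hnonneg : ∀ᵐ ω ∂μ, 0 ≤ A ω) (δ : ℝ) {x : ℝ} (hx : 0 < x) :
    ∫ ω, A ω * Real.exp (-(A ω * x)) ∂μ
      ≤ δ * ∫ ω, Real.exp (-(A ω * x)) ∂μ + Real.exp (-(δ * x)) / x := by
  have hE := integrable_exp_neg_mul hA hnonneg hx.le
  have hAE := integrable_mul_exp_neg_mul hA hnonneg hx
  have hdiff : ∫ ω, (A ω * Real.exp (-(A ω * x)) - δ * Real.exp (-(A ω * x))) ∂μ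
      ≤ Real.exp (-(δ * x)) / x := by
    calc ∫ ω, (A ω * Real.exp (-(A ω * x)) - δ * Real.exp (-(A ω * x))) ∂μ
        ≤ ∫ _ω, Real.exp (-(δ * x)) / x ∂μ :=
          integral_mono (hAE.sub (hE.const_mul δ)) (integrable_const _) fun ω => by
            simpa only [sub_mul] using
              Real.sub_mul_exp_neg_mul_le_exp_neg_mul_div (A ω) δ hx
      _ = Real.exp (-(δ * x)) / x := by simp
  rw [integral_sub hAE (hE.const_mul δ), integral_const_mul] at hdiff
  linarith

lemma tilted_mean_le [IsProbabilityMeasure μ] (hA : Measurable A)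
    (hnonneg : ∀ᵐ ω ∂μ, 0 ≤ A ω) {δ : ℝ} (hδ : 0 < μ.real {ω | A ω < δ})
    {x : ℝ} (hx : 0 < x) :
    (∫ ω, A ω * Real.exp (-(A ω * x)) ∂μ) / (∫ ω, Real.exp (-(A ω * x)) ∂μ)
      ≤ δ + (μ.real {ω | A ω < δ} * x)⁻¹ := by
  have hlow := exp_neg_mul_mul_measureReal_le_integral hA hnonneg δ hx.le
  have hD : 0 < ∫ ω, Real.exp (-(A ω * x)) ∂μ := lt_of_lt_of_le (by positivity) hlow
  rw [div_le_iff₀ hD, add_mul]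
  refine (integral_mul_exp_neg_mul_le hA hnonneg δ hx).trans (add_le_add_right ?_ _)
  calc Real.exp (-(δ * x)) / x
      = (μ.real {ω | A ω < δ} * x)⁻¹ * (Real.exp (-(δ * x)) * μ.real {ω | A ω < δ})
          := by field_simp
    _ ≤ (μ.real {ω | A ω < δ} * x)⁻¹ * ∫ ω, Real.exp (-(A ω * x)) ∂μ := by gcongr

lemma tilted_mean_nonneg (hnonneg : ∀ᵐ ω ∂μ, 0 ≤ A ω) (x : ℝ) :
    0 ≤ (∫ ω, A ω * Real.exp (-(A ω * x)) ∂μ) / (∫ ω, Real.exp (-(A ω * x)) ∂μ) :=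
  div_nonneg (integral_nonneg_of_ae (hnonneg.mono fun _ h => mul_nonneg h (Real.exp_pos _).le))
    (integral_nonneg fun _ => (Real.exp_pos _).le)

end TiltedMean

/-- If `A` is a.s. strictly positive with essential infimum 0, then the tilted mean
`E[A·exp(-Ax)]/E[exp(-Ax)]` tends to `0` as `x → ∞`. -/
theorem tilted_mean_tendsto_zero {Ω : Type*} [MeasurableSpace Ω]
    (μ : Measure Ω) [IsProbabilityMeasure μ]
    (A : Ω → ℝ) (hA : Measurable A)
    (hpos : ∀ᵐ ω ∂μ, 0 < A ω)
    (hinf : ∀ ε : ℝ, 0 < ε → 0 < μ {ω | A ω < ε}) :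
    Tendsto (fun x : ℝ =>
        (∫ ω, A ω * Real.exp (-(A ω * x)) ∂μ) / (∫ ω, Real.exp (-(A ω * x)) ∂μ))
      atTop (nhds 0) := by
  have hnonneg : ∀ᵐ ω ∂μ, 0 ≤ A ω := hpos.mono fun _ h => h.le
  refine tendsto_order.2 ⟨fun ε hε => Eventually.of_forall fun x =>
    hε.trans_le (tilted_mean_nonneg hnonneg x), fun ε hε => ?_⟩
  set c := μ.real {ω | A ω < ε / 2}
  have hc : 0 < c := ENNReal.toReal_pos (hinf _ (half_pos hε)).ne' (measure_ne_top μ _)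
  have hbound : Tendsto (fun x => ε / 2 + (c * x)⁻¹) atTop (nhds (ε / 2)) := by
    simpa using tendsto_const_nhds.add
      (tendsto_inv_atTop_zero.comp (tendsto_id.const_mul_atTop hc))
  filter_upwards [hbound.eventually (gt_mem_nhds (half_lt_self hε)), eventually_gt_atTop 0]
    with x hlt hx
  exact (tilted_mean_le hA hnonneg hc hx).trans_lt hlt
end

section
/- Let Ψ_c, Ψ_c*, Ψ₂, Ψ₂* : [0,∞) → (0,∞) be differentiable functions with Ψ_c(0) = Ψ_c*(0) = 1, whose logarithmic derivatives (log Ψ_c)', (log Ψ_c*)', (log Ψ₂)', (log Ψ₂*)' are strictly negative everywhere on [0,∞). Suppose that for all x₁, x₂ ≥ 0, (log Ψ_c)'(x₁+x₂) · (log Ψ₂*)'(x₂) = (log Ψ_c*)'(x₁+x₂) · (log Ψ₂)'(x₂). Then there exists ν > 0 such that Ψ_c(t) = Ψ_c*(t)^ν for all t ≥ 0. -/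
/-! Setting `x₂ = 0` in the cross equation shows that `(log Ψ_c)'` is the constant multiple
`ν = (log Ψ₂)'(0) / (log Ψ₂*)'(0) > 0` of `(log Ψ_c*)'` on `[0, ∞)`. Hence
`log Ψ_c - ν log Ψ_c*` has zero derivative there, so it is constant, equal to its value `0` at
the origin. -/

open Real Set

theorem Convex.apply_eq_of_deriv_eq_zero {s : Set ℝ} {f : ℝ → ℝ} (hs : Convex ℝ s)
    (hf : ∀ x ∈ s, DifferentiableAt ℝ f x) (hf' : ∀ x ∈ s, deriv f x = 0)
    {x y : ℝ} (hx : x ∈ s) (hy : y ∈ s) : f y = f x := by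
  have h := hs.norm_image_sub_le_of_norm_deriv_le hf (C := 0)
    (fun z hz => by rw [hf' z hz, norm_zero]) hx hy
  rwa [zero_mul, norm_le_zero_iff, sub_eq_zero] at h

theorem Convex.eq_rpow_of_deriv_log_eq_const_mul {s : Set ℝ} {f g : ℝ → ℝ} {a ν : ℝ}
    (hs : Convex ℝ s) (hf : ∀ x ∈ s, DifferentiableAt ℝ f x)
    (hg : ∀ x ∈ s, DifferentiableAt ℝ g x) (hfpos : ∀ x ∈ s, 0 < f x)
    (hgpos : ∀ x ∈ s, 0 < g x) (ha : a ∈ s) (hfa : f a = 1) (hga : g a = 1)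
    (hfg : ∀ x ∈ s, deriv (fun t => log (f t)) x = ν * deriv (fun t => log (g t)) x) :
    ∀ x ∈ s, f x = g x ^ ν := by
  have hlogf x (hx : x ∈ s) := (hf x hx).log (hfpos x hx).ne'
  have hlogg x (hx : x ∈ s) := (hg x hx).log (hgpos x hx).ne'
  have hconst : ∀ x ∈ s, log (f x) - ν * log (g x) = log (f a) - ν * log (g a) :=
    fun x hx => hs.apply_eq_of_deriv_eq_zero (f := fun t => log (f t) - ν * log (g t))
      (fun y hy => (hlogf y hy).sub ((hlogg y hy).const_mul ν))
      (fun y hy => by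
        rw [deriv_fun_sub (hlogf y hy) ((hlogg y hy).const_mul ν), deriv_const_mul _ (hlogg y hy),
          hfg y hy, sub_self])
      ha hx
  intro x hx
  have hlog : log (f x) = log (g x) * ν := by
    have h := hconst x hx
    rw [hfa, hga, log_one, mul_zero, sub_zero] at h
    linarith
  rw [rpow_def_of_pos (hgpos x hx), ← hlog, exp_log (hfpos x hx)]

theorem sara_recursive_identification_general (Ψc Ψcs Ψ₂ Ψ₂s : ℝ → ℝ)
    (hc : Differentiable ℝ Ψc) (hcs : Differentiable ℝ Ψcs)
    (hposc : ∀ t : ℝ, 0 < Ψc t) (hposcs : ∀ t : ℝ, 0 < Ψcs t)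
    (h0c : Ψc 0 = 1) (h0cs : Ψcs 0 = 1)
    (hneg₂ : ∀ t : ℝ, 0 ≤ t → deriv (fun s => Real.log (Ψ₂ s)) t < 0)
    (hneg₂s : ∀ t : ℝ, 0 ≤ t → deriv (fun s => Real.log (Ψ₂s s)) t < 0)
    (heq : ∀ x₁ x₂ : ℝ, 0 ≤ x₁ → 0 ≤ x₂ →
      deriv (fun s => Real.log (Ψc s)) (x₁ + x₂) * deriv (fun s => Real.log (Ψ₂s s)) x₂ =
      deriv (fun s => Real.log (Ψcs s)) (x₁ + x₂) * deriv (fun s => Real.log (Ψ₂ s)) x₂) :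
    ∃ ν : ℝ, 0 < ν ∧ ∀ t : ℝ, 0 ≤ t → Ψc t = Ψcs t ^ ν := by
  have hA := hneg₂s 0 le_rfl
  have hB := hneg₂ 0 le_rfl
  refine ⟨_, div_pos_of_neg_of_neg hB hA, (convex_Ici 0).eq_rpow_of_deriv_log_eq_const_mul
    (fun x _ => hc x) (fun x _ => hcs x) (fun x _ => hposc x) (fun x _ => hposcs x)
    self_mem_Ici h0c h0cs fun t ht => ?_⟩
  have h := heq t 0 ht le_rfl
  rw [add_zero] at h
  rw [div_mul_eq_mul_div, eq_div_iff hA.ne]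
  linear_combination h

/-- Recursive-case Proposition (Appendix E.3): if the logarithmic derivatives satisfy the
cross equation `(log Ψ_c)'(x₁+x₂)·(log Ψ₂*)'(x₂) = (log Ψ_c*)'(x₁+x₂)·(log Ψ₂)'(x₂)`
everywhere on the nonnegative orthant, then `Ψ_c = (Ψ_c*)^ν` on `[0,∞)` for some `ν > 0`. -/
theorem sara_recursive_identification (Ψc Ψcs Ψ₂ Ψ₂s : ℝ → ℝ)
    (hc : Differentiable ℝ Ψc) (hcs : Differentiable ℝ Ψcs)
    (h₂ : Differentiable ℝ Ψ₂) (h₂s : Differentiable ℝ Ψ₂s)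
    (hposc : ∀ t : ℝ, 0 < Ψc t) (hposcs : ∀ t : ℝ, 0 < Ψcs t)
    (hpos₂ : ∀ t : ℝ, 0 < Ψ₂ t) (hpos₂s : ∀ t : ℝ, 0 < Ψ₂s t)
    (h0c : Ψc 0 = 1) (h0cs : Ψcs 0 = 1)
    (hnegc : ∀ t : ℝ, 0 ≤ t → deriv (fun s => Real.log (Ψc s)) t < 0)
    (hnegcs : ∀ t : ℝ, 0 ≤ t → deriv (fun s => Real.log (Ψcs s)) t < 0)
    (hneg₂ : ∀ t : ℝ, 0 ≤ t → deriv (fun s => Real.log (Ψ₂ s)) t < 0)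
    (hneg₂s : ∀ t : ℝ, 0 ≤ t → deriv (fun s => Real.log (Ψ₂s s)) t < 0)
    (heq : ∀ x₁ x₂ : ℝ, 0 ≤ x₁ → 0 ≤ x₂ →
      deriv (fun s => Real.log (Ψc s)) (x₁ + x₂) * deriv (fun s => Real.log (Ψ₂s s)) x₂ =
      deriv (fun s => Real.log (Ψcs s)) (x₁ + x₂) * deriv (fun s => Real.log (Ψ₂ s)) x₂) :
    ∃ ν : ℝ, 0 < ν ∧ ∀ t : ℝ, 0 ≤ t → Ψc t = Ψcs t ^ ν :=
  sara_recursive_identification_general Ψc Ψcs Ψ₂ Ψ₂s hc hcs hposc hposcs h0c h0cs hneg₂ hneg₂s heq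
end

section
/- Let A_c, A₁, A₂, A_c*, A₁*, A₂* be real random variables, each strictly positive almost surely and each with support equal to (0,∞) (in particular P(X < ε) > 0 for every ε > 0). Let Ψ denote the Laplace transform, e.g. Ψ_c(x) = E[exp(-A_c x)], and write h(x) = (log Ψ)'(x) for the logarithmic derivative. Suppose that for all x₁, x₂ ≥ 0: (h_c(x₁+x₂) + h₁(x₁)) · (h_c*(x₁+x₂) + h₂*(x₂)) = (h_c*(x₁+x₂) + h₁*(x₁)) · (h_c(x₁+x₂) + h₂(x₂)). Then there exists ν > 0 such that Ψ_c(t) = Ψ_c*(t)^ν, Ψ₁(t) = Ψ₁*(t)^ν, and Ψ₂(t) = Ψ₂*(t)^ν for all t ≥ 0. -/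
/-!
With `M_k(x) = E[X^k e^{-X x}]`, the log-derivative of the Laplace transform is
`h = -M₁/M₀ < 0` and `h' = (M₂M₀ - M₁²)/M₀² > 0`. Because the law of `X` charges every
neighbourhood of `0`, the tilted means `M_{k+1}/M_k` tend to `0`; hence `h → 0` and `h'/h → 0`
at infinity.

Differentiating the logarithm of the MRS identity in `x₁` and letting `x₂ → ∞` removes the
common-component terms and leaves `h₁'/h₁ = h₁*'/h₁*`, so `h₁ = ν h₁*`, and likewise
`h₂ = ν' h₂*`. Substituting back, the identity becomes
`α(x₁+x₂)(h₂*(x₂) - h₁*(x₁)) + (ν - ν') h₂*(x₂)(h_c*(x₁+x₂) + h₁*(x₁)) = 0` with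
`α = h_c - ν h_c*`. Fixing one argument and letting the other go to infinity forces `ν = ν'`,
after which the strict monotonicity of `h₁*` and `h₂*` forces `α = 0`. Integrating the
log-derivatives from `0`, where every Laplace transform equals `1`, gives `Ψ = Ψ*^ν`.
-/

open MeasureTheory Filter Topology Set Real
open scoped Nat

lemma pow_mul_exp_neg_le (k : ℕ) {t x : ℝ} (ht : 0 ≤ t) (hx : 0 < x) :
    t ^ k * exp (-(t * x)) ≤ k ! / x ^ k := by
  have h := pow_div_factorial_le_exp _ (mul_nonneg ht hx.le) k
  rw [div_le_iff₀ (by positivity)] at h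
  rw [le_div_iff₀ (by positivity), exp_neg]
  calc t ^ k * (exp (t * x))⁻¹ * x ^ k = (t * x) ^ k * (exp (t * x))⁻¹ := by ring
    _ ≤ exp (t * x) * k ! * (exp (t * x))⁻¹ := by gcongr
    _ = k ! := by field_simp

lemma pow_succ_mul_exp_neg_le (k : ℕ) {ε t x : ℝ} (hε : 0 ≤ ε) (ht : 0 ≤ t) (hx : 0 < x) :
    t ^ (k + 1) * exp (-(t * x)) ≤
      ε * (t ^ k * exp (-(t * x))) + (k + 1)! / (x / 2) ^ (k + 1) * exp (-(ε * (x / 2))) := by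
  rcases le_or_gt t ε with htε | htε
  · have : t ^ (k + 1) * exp (-(t * x)) ≤ ε * (t ^ k * exp (-(t * x))) := by
      rw [pow_succ, mul_comm _ t, mul_assoc]
      gcongr
    have : 0 ≤ (k + 1)! / (x / 2) ^ (k + 1) * exp (-(ε * (x / 2))) := by positivity
    linarith
  · calc t ^ (k + 1) * exp (-(t * x))
          = t ^ (k + 1) * exp (-(t * (x / 2))) * exp (-(t * (x / 2))) := by
            rw [mul_assoc, ← exp_add]; ring_nf
      _ ≤ (k + 1)! / (x / 2) ^ (k + 1) * exp (-(ε * (x / 2))) := by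
            gcongr
            · exact pow_mul_exp_neg_le (k + 1) ht (by positivity)
      _ ≤ _ := le_add_of_nonneg_left (by positivity)

lemma norm_exp_neg_mul_le_one {z x : ℝ} (hz : 0 ≤ z) (hx : 0 ≤ x) : ‖exp (-(z * x))‖ ≤ 1 := by
  rw [Real.norm_of_nonneg (exp_pos _).le, exp_le_one_iff, neg_nonpos]
  exact mul_nonneg hz hx

section LaplaceMoment

variable {Ω : Type*} [MeasurableSpace Ω] {μ : Measure Ω} {X : Ω → ℝ} {Ψ h : ℝ → ℝ}

noncomputable def laplaceMoment (μ : Measure Ω) (X : Ω → ℝ) (k : ℕ) (x : ℝ) : ℝ :=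
  ∫ ω, X ω ^ k * exp (-(X ω * x)) ∂μ

lemma laplaceMoment_zero_eq (hΨ : ∀ x, Ψ x = ∫ ω, exp (-(X ω * x)) ∂μ) :
    laplaceMoment μ X 0 = Ψ :=
  funext fun x => by simp [laplaceMoment, hΨ]

variable [IsFiniteMeasure μ]

lemma integrable_laplaceMoment (hX : Measurable X) (hX0 : ∀ᵐ ω ∂μ, 0 ≤ X ω) (k : ℕ) {x : ℝ}
    (hx : 0 < x) : Integrable (fun ω => X ω ^ k * exp (-(X ω * x))) μ := by
  refine Integrable.mono' (integrable_const ((k ! : ℝ) / x ^ k)) (by fun_prop) ?_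
  filter_upwards [hX0] with ω hω
  rw [Real.norm_of_nonneg (by positivity)]
  exact pow_mul_exp_neg_le k hω hx

lemma hasDerivAt_laplaceMoment (hX : Measurable X) (hX0 : ∀ᵐ ω ∂μ, 0 ≤ X ω) (k : ℕ) {x : ℝ}
    (hx : 0 < x) : HasDerivAt (laplaceMoment μ X k) (-laplaceMoment μ X (k + 1) x) x := by
  have := hasDerivAt_integral_of_dominated_loc_of_deriv_le (μ := μ) (x₀ := x)
    (F := fun s ω => X ω ^ k * exp (-(X ω * s)))
    (F' := fun s ω => -(X ω ^ (k + 1) * exp (-(X ω * s))))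
    (bound := fun _ => ((k + 1)! : ℝ) / (x / 2) ^ (k + 1))
    (Ioi_mem_nhds (half_lt_self hx)) (Eventually.of_forall fun s => by fun_prop)
    (integrable_laplaceMoment hX hX0 k hx) (by fun_prop) ?_ (integrable_const _) ?_
  · rw [laplaceMoment, ← integral_neg]
    exact this.2
  · filter_upwards [hX0] with ω hω s hs
    rw [norm_neg, Real.norm_of_nonneg (by positivity)]
    calc X ω ^ (k + 1) * exp (-(X ω * s)) ≤ X ω ^ (k + 1) * exp (-(X ω * (x / 2))) := by
          gcongr; exact hs.le
      _ ≤ _ := pow_mul_exp_neg_le (k + 1) hω (by positivity)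
  · refine ae_of_all _ fun ω s _ => ?_
    exact ((((hasDerivAt_id s).const_mul (X ω)).neg.exp).const_mul (X ω ^ k)).congr_deriv
      (by simp only [id, mul_one, Pi.neg_apply]; ring)


lemma laplaceMoment_ge (hX : Measurable X) (hX0 : ∀ᵐ ω ∂μ, 0 ≤ X ω) (k : ℕ) {s t x : ℝ}
    (hs : 0 ≤ s) (hx : 0 < x) :
    s ^ k * exp (-(t * x)) * μ.real {ω | X ω ∈ Ioo s t} ≤ laplaceMoment μ X k x := by
  have hS : MeasurableSet {ω | X ω ∈ Ioo s t} := hX measurableSet_Ioo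
  rw [mul_comm, ← smul_eq_mul, ← integral_indicator_const _ hS]
  refine integral_mono_ae ((integrable_const _).indicator hS)
    (integrable_laplaceMoment hX hX0 k hx) ?_
  filter_upwards [hX0] with ω hω
  by_cases hωS : ω ∈ {ω | X ω ∈ Ioo s t}
  · rw [indicator_of_mem hωS]
    gcongr
    exacts [hωS.1.le, hωS.2.le]
  · rw [indicator_of_notMem hωS]
    positivity

lemma continuousOn_laplaceMoment_zero (hX : Measurable X) (hX0 : ∀ᵐ ω ∂μ, 0 ≤ X ω) :
    ContinuousOn (laplaceMoment μ X 0) (Ici 0) := by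
  rw [laplaceMoment_zero_eq fun _ => rfl]
  exact continuousOn_of_dominated (fun x _ => by fun_prop)
    (fun x hx => hX0.mono fun ω hω => norm_exp_neg_mul_le_one hω hx) (integrable_const 1)
    (ae_of_all _ fun ω => by fun_prop)

lemma laplaceMoment_succ_le (hX : Measurable X) (hX0 : ∀ᵐ ω ∂μ, 0 ≤ X ω) (k : ℕ) {ε x : ℝ}
    (hε : 0 ≤ ε) (hx : 0 < x) :
    laplaceMoment μ X (k + 1) x ≤
      ε * laplaceMoment μ X k x +
        μ.real univ * ((k + 1)! / (x / 2) ^ (k + 1) * exp (-(ε * (x / 2)))) := by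
  have hk := integrable_laplaceMoment hX hX0 k hx
  calc laplaceMoment μ X (k + 1) x
      ≤ ∫ ω, (ε * (X ω ^ k * exp (-(X ω * x))) +
          (k + 1)! / (x / 2) ^ (k + 1) * exp (-(ε * (x / 2)))) ∂μ := by
        refine integral_mono_ae (integrable_laplaceMoment hX hX0 (k + 1) hx)
          ((hk.const_mul ε).add (integrable_const _)) ?_
        filter_upwards [hX0] with ω hω
        exact pow_succ_mul_exp_neg_le k hε hω hx
    _ = _ := by
        rw [integral_add (hk.const_mul ε) (integrable_const _), integral_const_mul]
        simp [laplaceMoment]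

variable [NeZero μ]

lemma laplaceMoment_pos (hX : Measurable X) (hX0 : ∀ᵐ ω ∂μ, 0 < X ω) (k : ℕ) {x : ℝ}
    (hx : 0 < x) : 0 < laplaceMoment μ X k x := by
  refine (integral_pos_iff_support_of_nonneg_ae ?_
    (integrable_laplaceMoment hX (hX0.mono fun _ => le_of_lt) k hx)).2 ?_
  · filter_upwards [hX0] with ω hω
    positivity
  · refine pos_iff_ne_zero.2 fun h0 => NeZero.ne μ (ae_eq_bot.1 (eventually_false_iff_eq_bot.1 ?_))
    filter_upwards [measure_eq_zero_iff_ae_notMem.1 h0, hX0] with ω hω hωX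
    exact hω (by simp only [Function.mem_support]; positivity)

lemma laplaceMoment_zero_pos (hX : Measurable X) (hX0 : ∀ᵐ ω ∂μ, 0 ≤ X ω) {x : ℝ} (hx : 0 ≤ x) :
    0 < laplaceMoment μ X 0 x := by
  rw [laplaceMoment_zero_eq fun _ => rfl]
  exact integral_exp_pos (Integrable.mono' (integrable_const 1) (by fun_prop)
    (hX0.mono fun ω hω => norm_exp_neg_mul_le_one hω hx))

theorem tendsto_laplaceMoment_succ_div (hX : Measurable X) (hX0 : ∀ᵐ ω ∂μ, 0 < X ω)
    (hsupp : ∀ s t : ℝ, 0 ≤ s → s < t → 0 < μ {ω | X ω ∈ Ioo s t}) (k : ℕ) :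
    Tendsto (fun x => laplaceMoment μ X (k + 1) x / laplaceMoment μ X k x) atTop (𝓝 0) := by
  have hX0' : ∀ᵐ ω ∂μ, 0 ≤ X ω := hX0.mono fun _ => le_of_lt
  refine tendsto_order.2 ⟨fun a ha => (eventually_gt_atTop 0).mono fun x hx =>
    ha.trans (div_pos (laplaceMoment_pos hX hX0 _ hx) (laplaceMoment_pos hX hX0 _ hx)), ?_⟩
  intro δ hδ
  obtain ⟨ε, hε, rfl⟩ : ∃ ε, 0 < ε ∧ 2 * ε = δ := ⟨δ / 2, by positivity, by ring⟩
  -- `M_k(x) ≥ (ε/4)^k e^{-εx/2} μ(ε/4 < X < ε/2)`, whereas `{X > ε}` contributes only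
  -- `O(x^{-(k+1)} e^{-εx/2})` to `M_{k+1}(x)`.
  set p := μ.real {ω | X ω ∈ Ioo (ε / 4) (ε / 2)}
  have hp : 0 < p := ENNReal.toReal_pos (hsupp _ _ (by positivity) (by linarith)).ne'
    (measure_ne_top _ _)
  obtain ⟨K, hK0, hK⟩ : ∃ K : ℝ, 0 ≤ K ∧ K * ((ε / 4) ^ k * p) = μ.real univ * (k + 1)! :=
    ⟨_, by positivity, div_mul_cancel₀ _ (by positivity)⟩
  have hQ : Tendsto (fun x : ℝ => K / (x / 2) ^ (k + 1)) atTop (𝓝 0) :=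
    tendsto_const_nhds.div_atTop
      ((tendsto_pow_atTop (Nat.succ_ne_zero k)).comp (tendsto_id.atTop_div_const two_pos))
  filter_upwards [eventually_gt_atTop 0, hQ.eventually (eventually_lt_nhds hε)] with x hx hQx
  have hMk := laplaceMoment_pos hX hX0 k hx
  have hlow := laplaceMoment_ge hX hX0' k (s := ε / 4) (t := ε / 2) (by positivity) hx
  rw [div_lt_iff₀ hMk]
  calc laplaceMoment μ X (k + 1) x
      ≤ ε * laplaceMoment μ X k x +
          μ.real univ * ((k + 1)! / (x / 2) ^ (k + 1) * exp (-(ε * (x / 2)))) :=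
        laplaceMoment_succ_le hX hX0' k hε.le hx
    _ = ε * laplaceMoment μ X k x +
          K / (x / 2) ^ (k + 1) * ((ε / 4) ^ k * exp (-(ε / 2 * x)) * p) := by
        rw [show ε / 2 * x = ε * (x / 2) by ring]
        linear_combination (-exp (-(ε * (x / 2))) / (x / 2) ^ (k + 1)) * hK
    _ ≤ ε * laplaceMoment μ X k x + K / (x / 2) ^ (k + 1) * laplaceMoment μ X k x := by
        gcongr
    _ < 2 * ε * laplaceMoment μ X k x := by nlinarith [mul_lt_mul_of_pos_right hQx hMk]

theorem laplaceMoment_one_sq_lt (hX : Measurable X) (hX0 : ∀ᵐ ω ∂μ, 0 < X ω)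
    (hsupp : ∀ s t : ℝ, 0 ≤ s → s < t → 0 < μ {ω | X ω ∈ Ioo s t}) {x : ℝ} (hx : 0 < x) :
    laplaceMoment μ X 1 x ^ 2 < laplaceMoment μ X 2 x * laplaceMoment μ X 0 x := by
  have hX0' : ∀ᵐ ω ∂μ, 0 ≤ X ω := hX0.mono fun _ => le_of_lt
  have hint := fun k => integrable_laplaceMoment hX hX0' k hx
  have hM0 := laplaceMoment_pos hX hX0 0 hx
  have hM1 := laplaceMoment_pos hX hX0 1 hx
  set m := laplaceMoment μ X 1 x / laplaceMoment μ X 0 x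
  have hm : 0 < m := div_pos hM1 hM0
  have hmM : laplaceMoment μ X 0 x * m = laplaceMoment μ X 1 x := mul_div_cancel₀ _ hM0.ne'
  have hexpand : (fun ω => (X ω - m) ^ 2 * exp (-(X ω * x))) = fun ω =>
      X ω ^ 2 * exp (-(X ω * x)) - 2 * m * (X ω ^ 1 * exp (-(X ω * x))) +
        m ^ 2 * (X ω ^ 0 * exp (-(X ω * x))) := by
    ext ω; ring
  have hvar : 0 < ∫ ω, (X ω - m) ^ 2 * exp (-(X ω * x)) ∂μ := by
    have hintv : Integrable (fun ω => (X ω - m) ^ 2 * exp (-(X ω * x))) μ := by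
      rw [hexpand]
      exact ((hint 2).sub ((hint 1).const_mul _)).add ((hint 0).const_mul _)
    refine (integral_pos_iff_support_of_nonneg_ae (ae_of_all _ fun ω => by positivity) hintv).2
      ((hsupp (m + 1) (m + 2) (by positivity) (by linarith)).trans_le (measure_mono ?_))
    intro ω hω
    have : X ω - m ≠ 0 := by linarith [hω.1]
    simp only [Function.mem_support]
    positivity
  have hint21 : Integrable (fun ω => X ω ^ 2 * exp (-(X ω * x)) -
      2 * m * (X ω ^ 1 * exp (-(X ω * x)))) μ := (hint 2).sub ((hint 1).const_mul _)
  rw [hexpand, integral_add hint21 ((hint 0).const_mul _),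
    integral_sub (hint 2) ((hint 1).const_mul _), integral_const_mul, integral_const_mul] at hvar
  change 0 < laplaceMoment μ X 2 x - 2 * m * laplaceMoment μ X 1 x +
    m ^ 2 * laplaceMoment μ X 0 x at hvar
  have : laplaceMoment μ X 2 x * laplaceMoment μ X 0 x - laplaceMoment μ X 1 x ^ 2 =
      laplaceMoment μ X 0 x * (laplaceMoment μ X 2 x - 2 * m * laplaceMoment μ X 1 x +
        m ^ 2 * laplaceMoment μ X 0 x) := by
    linear_combination (laplaceMoment μ X 1 x - laplaceMoment μ X 0 x * m) * hmM
  nlinarith [mul_pos hM0 hvar]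

lemma logDeriv_laplace_eq (hX : Measurable X) (hX0 : ∀ᵐ ω ∂μ, 0 < X ω)
    (hΨ : ∀ x, Ψ x = ∫ ω, exp (-(X ω * x)) ∂μ) (hh : ∀ x, h x = deriv (fun s => log (Ψ s)) x)
    {x : ℝ} (hx : 0 < x) : h x = -(laplaceMoment μ X 1 x / laplaceMoment μ X 0 x) := by
  rw [hh, ← laplaceMoment_zero_eq hΨ, ((hasDerivAt_laplaceMoment hX (hX0.mono fun _ => le_of_lt)
    0 hx).log (laplaceMoment_pos hX hX0 0 hx).ne').deriv, neg_div]

lemma hasDerivAt_logDeriv_laplace (hX : Measurable X) (hX0 : ∀ᵐ ω ∂μ, 0 < X ω)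
    (hΨ : ∀ x, Ψ x = ∫ ω, exp (-(X ω * x)) ∂μ) (hh : ∀ x, h x = deriv (fun s => log (Ψ s)) x)
    {x : ℝ} (hx : 0 < x) :
    HasDerivAt h ((laplaceMoment μ X 2 x * laplaceMoment μ X 0 x - laplaceMoment μ X 1 x ^ 2) /
      laplaceMoment μ X 0 x ^ 2) x := by
  have hX0' : ∀ᵐ ω ∂μ, 0 ≤ X ω := hX0.mono fun _ => le_of_lt
  refine ((((hasDerivAt_laplaceMoment hX hX0' 1 hx).div (hasDerivAt_laplaceMoment hX hX0' 0 hx)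
    (laplaceMoment_pos hX hX0 0 hx).ne').neg).congr_deriv (by ring)).congr_of_eventuallyEq ?_
  filter_upwards [Ioi_mem_nhds hx] with s hs using logDeriv_laplace_eq hX hX0 hΨ hh hs

lemma logDeriv_laplace_neg (hX : Measurable X) (hX0 : ∀ᵐ ω ∂μ, 0 < X ω)
    (hΨ : ∀ x, Ψ x = ∫ ω, exp (-(X ω * x)) ∂μ) (hh : ∀ x, h x = deriv (fun s => log (Ψ s)) x) :
    ∀ x > 0, h x < 0 := fun x hx => by
  rw [logDeriv_laplace_eq hX hX0 hΨ hh hx, neg_lt_zero]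
  exact div_pos (laplaceMoment_pos hX hX0 1 hx) (laplaceMoment_pos hX hX0 0 hx)

lemma differentiableAt_logDeriv_laplace (hX : Measurable X) (hX0 : ∀ᵐ ω ∂μ, 0 < X ω)
    (hΨ : ∀ x, Ψ x = ∫ ω, exp (-(X ω * x)) ∂μ) (hh : ∀ x, h x = deriv (fun s => log (Ψ s)) x) :
    ∀ x > 0, DifferentiableAt ℝ h x := fun _ hx =>
  (hasDerivAt_logDeriv_laplace hX hX0 hΨ hh hx).differentiableAt

structure IsRegularLogDeriv (h : ℝ → ℝ) : Prop where
  neg : ∀ x > 0, h x < 0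
  differentiableAt : ∀ x > 0, DifferentiableAt ℝ h x
  strictMonoOn : StrictMonoOn h (Ioi 0)
  tendsto_atTop : Tendsto h atTop (𝓝 0)
  tendsto_deriv_div : Tendsto (fun x => deriv h x / h x) atTop (𝓝 0)

theorem isRegularLogDeriv_of_laplace (hX : Measurable X) (hX0 : ∀ᵐ ω ∂μ, 0 < X ω)
    (hsupp : ∀ s t : ℝ, 0 ≤ s → s < t → 0 < μ {ω | X ω ∈ Ioo s t})
    (hΨ : ∀ x, Ψ x = ∫ ω, exp (-(X ω * x)) ∂μ) (hh : ∀ x, h x = deriv (fun s => log (Ψ s)) x) :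
    IsRegularLogDeriv h where
  neg := logDeriv_laplace_neg hX hX0 hΨ hh
  differentiableAt := differentiableAt_logDeriv_laplace hX hX0 hΨ hh
  strictMonoOn := by
    refine strictMonoOn_of_deriv_pos (convex_Ioi 0) (fun x hx =>
      (hasDerivAt_logDeriv_laplace hX hX0 hΨ hh hx).continuousAt.continuousWithinAt) ?_
    intro x hx
    rw [interior_Ioi] at hx
    rw [(hasDerivAt_logDeriv_laplace hX hX0 hΨ hh hx).deriv]
    have := laplaceMoment_pos hX hX0 0 hx
    exact div_pos (sub_pos.2 (laplaceMoment_one_sq_lt hX hX0 hsupp hx)) (by positivity)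
  tendsto_atTop := by
    have := (tendsto_laplaceMoment_succ_div hX hX0 hsupp 0).neg
    rw [neg_zero] at this
    exact this.congr'
      ((eventually_gt_atTop 0).mono fun x hx => (logDeriv_laplace_eq hX hX0 hΨ hh hx).symm)
  tendsto_deriv_div := by
    have := ((tendsto_laplaceMoment_succ_div hX hX0 hsupp 1).sub
      (tendsto_laplaceMoment_succ_div hX hX0 hsupp 0)).neg
    rw [sub_zero, neg_zero] at this
    refine this.congr' ((eventually_gt_atTop 0).mono fun x hx => ?_)
    have := laplaceMoment_pos hX hX0 0 hx
    have := laplaceMoment_pos hX hX0 1 hx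
    simp only [Nat.reduceAdd, zero_add]
    rw [(hasDerivAt_logDeriv_laplace hX hX0 hΨ hh hx).deriv, logDeriv_laplace_eq hX hX0 hΨ hh hx]
    field_simp

end LaplaceMoment

lemma eq_rpow_of_deriv_log_eq_mul {f g : ℝ → ℝ} {ν t : ℝ} (hf : ContinuousOn f (Ici 0))
    (hg : ContinuousOn g (Ici 0)) (hf0 : ∀ x ≥ 0, 0 < f x) (hg0 : ∀ x ≥ 0, 0 < g x)
    (hdf : ∀ x > 0, DifferentiableAt ℝ f x) (hdg : ∀ x > 0, DifferentiableAt ℝ g x)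
    (h : ∀ x > 0, deriv (fun s => log (f s)) x = ν * deriv (fun s => log (g s)) x)
    (h0 : f 0 = g 0 ^ ν) (ht : 0 ≤ t) : f t = g t ^ ν := by
  rcases ht.eq_or_lt with rfl | ht
  · exact h0
  set F := fun s => log (f s) - ν * log (g s)
  have hF0 : F 0 = 0 := by
    simp only [F, h0, log_rpow (hg0 0 le_rfl), sub_self]
  have hdF : ∀ x > 0, HasDerivAt F 0 x := fun x hx =>
    (((hdf x hx).log (hf0 x hx.le).ne').hasDerivAt.sub
      (((hdg x hx).log (hg0 x hx.le).ne').hasDerivAt.const_mul ν)).congr_deriv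
      (by rw [h x hx, sub_self])
  obtain ⟨c, hc, hFc⟩ := exists_deriv_eq_slope F ht
    ((hf.log fun x hx => (hf0 x hx).ne').sub
      ((hg.log fun x hx => (hg0 x hx).ne').const_smul ν) |>.mono Icc_subset_Ici_self)
    (fun x hx => (hdF x hx.1).differentiableAt.differentiableWithinAt)
  rw [(hdF c hc.1).deriv, hF0, sub_zero, sub_zero, eq_div_iff ht.ne', zero_mul, eq_comm,
    sub_eq_zero] at hFc
  rw [rpow_def_of_pos (hg0 t ht.le), mul_comm, ← hFc, exp_log (hf0 t ht.le)]

theorem laplace_eq_rpow_of_logDeriv_eq_mul {Ω : Type*} [MeasurableSpace Ω] {μ : Measure Ω}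
    [IsProbabilityMeasure μ] {X Y : Ω → ℝ} {Ψ Φ : ℝ → ℝ} {ν t : ℝ}
    (hX : Measurable X) (hX0 : ∀ᵐ ω ∂μ, 0 ≤ X ω) (hY : Measurable Y) (hY0 : ∀ᵐ ω ∂μ, 0 ≤ Y ω)
    (hΨ : ∀ x, Ψ x = ∫ ω, exp (-(X ω * x)) ∂μ) (hΦ : ∀ x, Φ x = ∫ ω, exp (-(Y ω * x)) ∂μ)
    (h : ∀ x > 0, deriv (fun s => log (Ψ s)) x = ν * deriv (fun s => log (Φ s)) x)
    (ht : 0 ≤ t) : Ψ t = Φ t ^ ν := by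
  rw [← laplaceMoment_zero_eq hΨ, ← laplaceMoment_zero_eq hΦ] at h ⊢
  exact eq_rpow_of_deriv_log_eq_mul (continuousOn_laplaceMoment_zero hX hX0)
    (continuousOn_laplaceMoment_zero hY hY0) (fun x => laplaceMoment_zero_pos hX hX0)
    (fun x => laplaceMoment_zero_pos hY hY0)
    (fun x hx => (hasDerivAt_laplaceMoment hX hX0 0 hx).differentiableAt)
    (fun x hx => (hasDerivAt_laplaceMoment hY hY0 0 hx).differentiableAt) h
    (by simp [laplaceMoment]) ht

lemma div_add_div_eq_of_mul_eventuallyEq {f g u v : ℝ → ℝ} {f' g' u' v' x : ℝ}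
    (hf : HasDerivAt f f' x) (hg : HasDerivAt g g' x) (hu : HasDerivAt u u' x)
    (hv : HasDerivAt v v' x) (h : f * g =ᶠ[𝓝 x] u * v)
    (hfx : f x ≠ 0) (hgx : g x ≠ 0) (hux : u x ≠ 0) (hvx : v x ≠ 0) :
    f' / f x + g' / g x = u' / u x + v' / v x := by
  have hd : f' * g x + f x * g' = u' * v x + u x * v' :=
    (hf.mul hg).unique ((hu.mul hv).congr_of_eventuallyEq h)
  have h0 : f x * g x = u x * v x := h.eq_of_nhds
  field_simp
  linear_combination (u x * v x) * hd - (u' * v x + u x * v') * h0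

lemma tendsto_div_add_of_tendsto_div {α : Type*} {l : Filter α} {f g k : α → ℝ}
    (h : Tendsto (fun z => f z / g z) l (𝓝 0)) (hg : ∀ᶠ z in l, g z < 0)
    (hk : ∀ᶠ z in l, k z ≤ 0) : Tendsto (fun z => f z / (g z + k z)) l (𝓝 0) := by
  refine squeeze_zero_norm' (a := fun z => |f z / g z|) ?_ (by simpa using h.abs)
  filter_upwards [hg, hk] with z hgz hkz
  rw [Real.norm_eq_abs, abs_div, abs_div, abs_of_neg hgz,
    abs_of_neg (show g z + k z < 0 by linarith)]
  exact div_le_div_of_nonneg_left (abs_nonneg _) (by linarith) (by linarith)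

lemma deriv_div_eq_of_mrs_eq {a A b B c C : ℝ → ℝ}
    (ha : ∀ x > 0, a x < 0) (hA : ∀ x > 0, A x < 0) (hb : ∀ x > 0, b x < 0)
    (hB : ∀ x > 0, B x < 0) (hc : ∀ x > 0, c x < 0) (hC : ∀ x > 0, C x < 0)
    (hda : ∀ x > 0, DifferentiableAt ℝ a x) (hdA : ∀ x > 0, DifferentiableAt ℝ A x)
    (hdb : ∀ x > 0, DifferentiableAt ℝ b x) (hdB : ∀ x > 0, DifferentiableAt ℝ B x)
    (ha0 : Tendsto a atTop (𝓝 0)) (hA0 : Tendsto A atTop (𝓝 0))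
    (ha' : Tendsto (fun x => deriv a x / a x) atTop (𝓝 0))
    (hA' : Tendsto (fun x => deriv A x / A x) atTop (𝓝 0))
    (hE : ∀ x > 0, ∀ y > 0,
      (a (x + y) + b x) * (A (x + y) + C y) = (A (x + y) + B x) * (a (x + y) + c y))
    {x : ℝ} (hx : 0 < x) : deriv b x / b x = deriv B x / B x := by
  have hz : Tendsto (fun y => x + y) atTop atTop := tendsto_atTop_add_const_left _ x tendsto_id
  have hzpos : ∀ᶠ y in atTop, 0 < x + y := hz.eventually_gt_atTop 0
  have hda0 : Tendsto (deriv a) atTop (𝓝 0) := by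
    simpa using (ha'.mul ha0).congr'
      ((eventually_gt_atTop 0).mono fun x hx => div_mul_cancel₀ _ (ha x hx).ne)
  have hdA0 : Tendsto (deriv A) atTop (𝓝 0) := by
    simpa using (hA'.mul hA0).congr'
      ((eventually_gt_atTop 0).mono fun x hx => div_mul_cancel₀ _ (hA x hx).ne)
  have key : ∀ y > 0,
      (deriv a (x + y) + deriv b x) / (a (x + y) + b x) + deriv A (x + y) / (A (x + y) + C y) =
      (deriv A (x + y) + deriv B x) / (A (x + y) + B x) + deriv a (x + y) / (a (x + y) + c y) := by
    intro y hy
    have hxy : 0 < x + y := by positivity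
    have sa := (hda _ hxy).hasDerivAt.comp_add_const x y
    have sA := (hdA _ hxy).hasDerivAt.comp_add_const x y
    refine div_add_div_eq_of_mul_eventuallyEq (sa.add (hdb x hx).hasDerivAt) (sA.add_const (C y))
      (sA.add (hdB x hx).hasDerivAt) (sa.add_const (c y)) ?_ ?_ ?_ ?_ ?_
    · filter_upwards [Ioi_mem_nhds hx] with s hs using hE s hs y hy
    all_goals
      try simp only [Pi.add_apply]
      linarith [ha _ hxy, hA _ hxy, hb x hx, hB x hx, hc y hy, hC y hy]
  have lim_b : Tendsto (fun y => (deriv a (x + y) + deriv b x) / (a (x + y) + b x)) atTop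
      (𝓝 (deriv b x / b x)) := by
    have := ((hda0.comp hz).add_const (deriv b x)).div
      ((ha0.comp hz).add_const (b x)) (by simpa using (hb x hx).ne)
    rwa [zero_add, zero_add] at this
  have lim_B : Tendsto (fun y => (deriv A (x + y) + deriv B x) / (A (x + y) + B x)) atTop
      (𝓝 (deriv B x / B x)) := by
    have := ((hdA0.comp hz).add_const (deriv B x)).div
      ((hA0.comp hz).add_const (B x)) (by simpa using (hB x hx).ne)
    rwa [zero_add, zero_add] at this
  have lim_C : Tendsto (fun y => deriv A (x + y) / (A (x + y) + C y)) atTop (𝓝 0) :=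
    tendsto_div_add_of_tendsto_div (hA'.comp hz) (hzpos.mono fun y hy => hA _ hy)
      ((eventually_gt_atTop 0).mono fun y hy => (hC y hy).le)
  have lim_c : Tendsto (fun y => deriv a (x + y) / (a (x + y) + c y)) atTop (𝓝 0) :=
    tendsto_div_add_of_tendsto_div (ha'.comp hz) (hzpos.mono fun y hy => ha _ hy)
      ((eventually_gt_atTop 0).mono fun y hy => (hc y hy).le)
  simpa using tendsto_nhds_unique ((lim_b.add lim_C).congr'
    ((eventually_gt_atTop 0).mono key)) (lim_B.add lim_c)

lemma exists_eq_const_mul_of_deriv_div_eq {b B : ℝ → ℝ} (hb : ∀ x > 0, b x ≠ 0)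
    (hB : ∀ x > 0, B x ≠ 0) (hdb : ∀ x > 0, DifferentiableAt ℝ b x)
    (hdB : ∀ x > 0, DifferentiableAt ℝ B x) (h : ∀ x > 0, deriv b x / b x = deriv B x / B x) :
    ∃ ν, ∀ x > 0, b x = ν * B x := by
  have hq : ∀ x > 0, HasDerivAt (fun s => b s / B s) 0 x := fun x hx =>
    ((hdb x hx).hasDerivAt.div (hdB x hx).hasDerivAt (hB x hx)).congr_deriv
      (by rw [(div_eq_div_iff (hb x hx) (hB x hx)).1 (h x hx)]; ring)
  obtain ⟨ν, hν⟩ := isOpen_Ioi.exists_is_const_of_deriv_eq_zero isPreconnected_Ioi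
    (fun x hx => (hq x hx).differentiableAt.differentiableWithinAt) (fun x hx => (hq x hx).deriv)
  exact ⟨ν, fun x hx => by rw [← hν x hx, div_mul_cancel₀ _ (hB x hx)]⟩

lemma eq_zero_of_mul_sub_add_mul_eq_zero {α A B C : ℝ → ℝ} {d : ℝ}
    (hα : Tendsto α atTop (𝓝 0)) (hA0 : Tendsto A atTop (𝓝 0))
    (hA : ∀ x > 0, A x < 0) (hB : ∀ x > 0, B x < 0) (hC : ∀ x > 0, C x < 0)
    (hE : ∀ x > 0, ∀ y > 0, α (x + y) * (C y - B x) + d * C y * (A (x + y) + B x) = 0) :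
    d = 0 := by
  by_contra hd
  have hd2 : 0 < d ^ 2 := by positivity
  have hB1 := hB 1 one_pos
  have hC1 := hC 1 one_pos
  have hu : Tendsto (fun z => d * (α z + d * A z + d * B 1)) atTop (𝓝 (d ^ 2 * B 1)) := by
    convert ((hα.add (hA0.const_mul d)).add_const (d * B 1)).const_mul d using 2; ring
  have hv : Tendsto (fun z => d * (d * C 1 - α z)) atTop (𝓝 (d ^ 2 * C 1)) := by
    convert (hα.const_sub (d * C 1)).const_mul d using 2; ring
  obtain ⟨z, hz, hzu, hzv⟩ := ((eventually_gt_atTop 1).and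
    ((hu.eventually (eventually_lt_nhds (by nlinarith : d ^ 2 * B 1 < 0))).and
      (hv.eventually (eventually_lt_nhds (by nlinarith : d ^ 2 * C 1 < 0))))).exists
  have e1 := hE 1 one_pos (z - 1) (by linarith)
  have e2 := hE (z - 1) (by linarith) 1 one_pos
  rw [add_sub_cancel] at e1
  rw [sub_add_cancel] at e2
  -- The two negative limits give opposite signs for `d * α z`.
  have p1 : 0 < d * α z * B 1 := by
    rw [← show C (z - 1) * (d * (α z + d * A z + d * B 1)) = d * α z * B 1 by
      linear_combination d * e1]
    exact mul_pos_of_neg_of_neg (hC (z - 1) (by linarith)) hzu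
  have p2 : 0 < -C 1 * (d * α z + d ^ 2 * A z) := by
    rw [← show B (z - 1) * (d * (d * C 1 - α z)) = -C 1 * (d * α z + d ^ 2 * A z) by
      linear_combination d * e2]
    exact mul_pos_of_neg_of_neg (hB (z - 1) (by linarith)) hzv
  have q1 : d * α z < 0 := by nlinarith
  have q2 : 0 < d * α z + d ^ 2 * A z := by nlinarith
  nlinarith [hA z (by linarith)]

lemma eq_zero_of_mul_sub_eq_zero {α B C : ℝ → ℝ}
    (hB : StrictMonoOn B (Ioi 0)) (hC : StrictMonoOn C (Ioi 0))
    (hE : ∀ x > 0, ∀ y > 0, α (x + y) * (C y - B x) = 0) {z : ℝ} (hz : 0 < z) : α z = 0 := by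
  by_contra hα
  have e1 := (mul_eq_zero.1 (hE (z / 4) (by positivity) (3 * z / 4) (by positivity))).resolve_left
    (by ring_nf; exact hα)
  have e2 := (mul_eq_zero.1 (hE (z / 2) (by positivity) (z / 2) (by positivity))).resolve_left
    (by ring_nf; exact hα)
  have m1 := hB (show (0 : ℝ) < z / 4 by positivity) (show (0 : ℝ) < z / 2 by positivity)
    (by linarith)
  have m2 := hC (show (0 : ℝ) < z / 2 by positivity) (show (0 : ℝ) < 3 * z / 4 by positivity)
    (by linarith)
  linarith

theorem exists_pos_eq_mul_of_mrs_eq {a A b B c C : ℝ → ℝ}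
    (ha : ∀ x > 0, a x < 0) (hA : ∀ x > 0, A x < 0) (hb : ∀ x > 0, b x < 0)
    (hB : ∀ x > 0, B x < 0) (hc : ∀ x > 0, c x < 0) (hC : ∀ x > 0, C x < 0)
    (hda : ∀ x > 0, DifferentiableAt ℝ a x) (hdA : ∀ x > 0, DifferentiableAt ℝ A x)
    (hdb : ∀ x > 0, DifferentiableAt ℝ b x) (hdB : ∀ x > 0, DifferentiableAt ℝ B x)
    (hdc : ∀ x > 0, DifferentiableAt ℝ c x) (hdC : ∀ x > 0, DifferentiableAt ℝ C x)
    (ha0 : Tendsto a atTop (𝓝 0)) (hA0 : Tendsto A atTop (𝓝 0))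
    (ha' : Tendsto (fun x => deriv a x / a x) atTop (𝓝 0))
    (hA' : Tendsto (fun x => deriv A x / A x) atTop (𝓝 0))
    (hBm : StrictMonoOn B (Ioi 0)) (hCm : StrictMonoOn C (Ioi 0))
    (hE : ∀ x > 0, ∀ y > 0,
      (a (x + y) + b x) * (A (x + y) + C y) = (A (x + y) + B x) * (a (x + y) + c y)) :
    ∃ ν > 0, ∀ x > 0, a x = ν * A x ∧ b x = ν * B x ∧ c x = ν * C x := by
  have hE' : ∀ x > 0, ∀ y > 0,
      (a (x + y) + c x) * (A (x + y) + B y) = (A (x + y) + C x) * (a (x + y) + b y) := by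
    intro x hx y hy
    rw [add_comm x y]
    linear_combination -hE y hy x hx
  obtain ⟨ν, hν⟩ := exists_eq_const_mul_of_deriv_div_eq (fun x hx => (hb x hx).ne)
    (fun x hx => (hB x hx).ne) hdb hdB
    fun x => deriv_div_eq_of_mrs_eq ha hA hb hB hc hC hda hdA hdb hdB ha0 hA0 ha' hA' hE
  obtain ⟨ν', hν'⟩ := exists_eq_const_mul_of_deriv_div_eq (fun x hx => (hc x hx).ne)
    (fun x hx => (hC x hx).ne) hdc hdC
    fun x => deriv_div_eq_of_mrs_eq ha hA hc hC hb hB hda hdA hdc hdC ha0 hA0 ha' hA' hE'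
  have hres : ∀ x > 0, ∀ y > 0, (a (x + y) - ν * A (x + y)) * (C y - B x) +
      (ν - ν') * C y * (A (x + y) + B x) = 0 := by
    intro x hx y hy
    have := hE x hx y hy
    rw [hν x hx, hν' y hy] at this
    linear_combination this
  have hνν' : ν - ν' = 0 := eq_zero_of_mul_sub_add_mul_eq_zero
    (by simpa using ha0.sub (hA0.const_mul ν)) hA0 hA hB hC hres
  have haA : ∀ z > 0, a z - ν * A z = 0 := fun z hz =>
    eq_zero_of_mul_sub_eq_zero (α := fun z => a z - ν * A z) hBm hCm
      (fun x hx y hy => by simpa [hνν'] using hres x hx y hy) hz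
  refine ⟨ν, by nlinarith [hν 1 one_pos, hb 1 one_pos, hB 1 one_pos], fun x hx =>
    ⟨by linarith [haA x hx], hν x hx, by rw [hν' x hx, show ν' = ν by linarith]⟩⟩

theorem sara_common_identification_from_mrs_general {Ω : Type*} [MeasurableSpace Ω]
    (μ : Measure Ω) [IsProbabilityMeasure μ]
    (Ac A₁ A₂ Acs A₁s A₂s : Ω → ℝ)
    (hAc : Measurable Ac) (hA₁ : Measurable A₁) (hA₂ : Measurable A₂)
    (hAcs : Measurable Acs) (hA₁s : Measurable A₁s) (hA₂s : Measurable A₂s)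
    (hposc : ∀ᵐ ω ∂μ, 0 < Ac ω) (hpos₁ : ∀ᵐ ω ∂μ, 0 < A₁ ω) (hpos₂ : ∀ᵐ ω ∂μ, 0 < A₂ ω)
    (hposcs : ∀ᵐ ω ∂μ, 0 < Acs ω) (hpos₁s : ∀ᵐ ω ∂μ, 0 < A₁s ω)
    (hpos₂s : ∀ᵐ ω ∂μ, 0 < A₂s ω)
    -- support equal to (0,∞): every open subinterval of (0,∞) has positive probability
    (hsuppc : ∀ s t : ℝ, 0 ≤ s → s < t → 0 < μ {ω | Ac ω ∈ Set.Ioo s t})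
    (hsuppcs : ∀ s t : ℝ, 0 ≤ s → s < t → 0 < μ {ω | Acs ω ∈ Set.Ioo s t})
    (hsupp₁s : ∀ s t : ℝ, 0 ≤ s → s < t → 0 < μ {ω | A₁s ω ∈ Set.Ioo s t})
    (hsupp₂s : ∀ s t : ℝ, 0 ≤ s → s < t → 0 < μ {ω | A₂s ω ∈ Set.Ioo s t})
    (Ψc Ψ₁ Ψ₂ Ψcs Ψ₁s Ψ₂s : ℝ → ℝ)
    (hΨc : ∀ x : ℝ, Ψc x = ∫ ω, Real.exp (-(Ac ω * x)) ∂μ)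
    (hΨ₁ : ∀ x : ℝ, Ψ₁ x = ∫ ω, Real.exp (-(A₁ ω * x)) ∂μ)
    (hΨ₂ : ∀ x : ℝ, Ψ₂ x = ∫ ω, Real.exp (-(A₂ ω * x)) ∂μ)
    (hΨcs : ∀ x : ℝ, Ψcs x = ∫ ω, Real.exp (-(Acs ω * x)) ∂μ)
    (hΨ₁s : ∀ x : ℝ, Ψ₁s x = ∫ ω, Real.exp (-(A₁s ω * x)) ∂μ)
    (hΨ₂s : ∀ x : ℝ, Ψ₂s x = ∫ ω, Real.exp (-(A₂s ω * x)) ∂μ)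
    (hc h₁ h₂ hcs h₁s h₂s : ℝ → ℝ)
    (hhc : ∀ x : ℝ, hc x = deriv (fun s => Real.log (Ψc s)) x)
    (hh₁ : ∀ x : ℝ, h₁ x = deriv (fun s => Real.log (Ψ₁ s)) x)
    (hh₂ : ∀ x : ℝ, h₂ x = deriv (fun s => Real.log (Ψ₂ s)) x)
    (hhcs : ∀ x : ℝ, hcs x = deriv (fun s => Real.log (Ψcs s)) x)
    (hh₁s : ∀ x : ℝ, h₁s x = deriv (fun s => Real.log (Ψ₁s s)) x)
    (hh₂s : ∀ x : ℝ, h₂s x = deriv (fun s => Real.log (Ψ₂s s)) x)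
    (heq : ∀ x₁ x₂ : ℝ, 0 ≤ x₁ → 0 ≤ x₂ →
      (hc (x₁ + x₂) + h₁ x₁) * (hcs (x₁ + x₂) + h₂s x₂) =
      (hcs (x₁ + x₂) + h₁s x₁) * (hc (x₁ + x₂) + h₂ x₂)) :
    ∃ ν : ℝ, 0 < ν ∧ ∀ t : ℝ, 0 ≤ t →
      Ψc t = Ψcs t ^ ν ∧ Ψ₁ t = Ψ₁s t ^ ν ∧ Ψ₂ t = Ψ₂s t ^ ν := by
  have Rc := isRegularLogDeriv_of_laplace hAc hposc hsuppc hΨc hhc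
  have Rcs := isRegularLogDeriv_of_laplace hAcs hposcs hsuppcs hΨcs hhcs
  have R₁s := isRegularLogDeriv_of_laplace hA₁s hpos₁s hsupp₁s hΨ₁s hh₁s
  have R₂s := isRegularLogDeriv_of_laplace hA₂s hpos₂s hsupp₂s hΨ₂s hh₂s
  obtain ⟨ν, hν, hrel⟩ := exists_pos_eq_mul_of_mrs_eq Rc.neg Rcs.neg
    (logDeriv_laplace_neg hA₁ hpos₁ hΨ₁ hh₁) R₁s.neg (logDeriv_laplace_neg hA₂ hpos₂ hΨ₂ hh₂)
    R₂s.neg Rc.differentiableAt Rcs.differentiableAt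
    (differentiableAt_logDeriv_laplace hA₁ hpos₁ hΨ₁ hh₁) R₁s.differentiableAt
    (differentiableAt_logDeriv_laplace hA₂ hpos₂ hΨ₂ hh₂) R₂s.differentiableAt
    Rc.tendsto_atTop Rcs.tendsto_atTop Rc.tendsto_deriv_div Rcs.tendsto_deriv_div
    R₁s.strictMonoOn R₂s.strictMonoOn fun x hx y hy => heq x y hx.le hy.le
  have nonneg : ∀ {Z : Ω → ℝ}, (∀ᵐ ω ∂μ, 0 < Z ω) → ∀ᵐ ω ∂μ, 0 ≤ Z ω :=
    fun h => h.mono fun _ => le_of_lt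
  refine ⟨ν, hν, fun t ht => ⟨?_, ?_, ?_⟩⟩
  · exact laplace_eq_rpow_of_logDeriv_eq_mul hAc (nonneg hposc) hAcs (nonneg hposcs) hΨc hΨcs
      (fun x hx => by rw [← hhc, ← hhcs]; exact (hrel x hx).1) ht
  · exact laplace_eq_rpow_of_logDeriv_eq_mul hA₁ (nonneg hpos₁) hA₁s (nonneg hpos₁s) hΨ₁ hΨ₁s
      (fun x hx => by rw [← hh₁, ← hh₁s]; exact (hrel x hx).2.1) ht
  · exact laplace_eq_rpow_of_logDeriv_eq_mul hA₂ (nonneg hpos₂) hA₂s (nonneg hpos₂s) hΨ₂ hΨ₂s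
      (fun x hx => by rw [← hh₂, ← hh₂s]; exact (hrel x hx).2.2) ht

/-- General-case Proposition (Appendix E.4): for the SARA model with a common stochastic
taste parameter, if two specifications (with all components a.s. strictly positive and
with support `(0,∞)`) yield the same marginal rate of substitution everywhere — the
cross-multiplied equation below, where `h = (log Ψ)'` — then their Laplace transforms
are related by a common positive power transformation on `[0,∞)`. -/
theorem sara_common_identification_from_mrs {Ω : Type*} [MeasurableSpace Ω]
    (μ : Measure Ω) [IsProbabilityMeasure μ]
    (Ac A₁ A₂ Acs A₁s A₂s : Ω → ℝ)
    (hAc : Measurable Ac) (hA₁ : Measurable A₁) (hA₂ : Measurable A₂)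
    (hAcs : Measurable Acs) (hA₁s : Measurable A₁s) (hA₂s : Measurable A₂s)
    (hposc : ∀ᵐ ω ∂μ, 0 < Ac ω) (hpos₁ : ∀ᵐ ω ∂μ, 0 < A₁ ω) (hpos₂ : ∀ᵐ ω ∂μ, 0 < A₂ ω)
    (hposcs : ∀ᵐ ω ∂μ, 0 < Acs ω) (hpos₁s : ∀ᵐ ω ∂μ, 0 < A₁s ω)
    (hpos₂s : ∀ᵐ ω ∂μ, 0 < A₂s ω)
    -- support equal to (0,∞): every open subinterval of (0,∞) has positive probability
    (hsuppc : ∀ s t : ℝ, 0 ≤ s → s < t → 0 < μ {ω | Ac ω ∈ Set.Ioo s t})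
    (hsupp₁ : ∀ s t : ℝ, 0 ≤ s → s < t → 0 < μ {ω | A₁ ω ∈ Set.Ioo s t})
    (hsupp₂ : ∀ s t : ℝ, 0 ≤ s → s < t → 0 < μ {ω | A₂ ω ∈ Set.Ioo s t})
    (hsuppcs : ∀ s t : ℝ, 0 ≤ s → s < t → 0 < μ {ω | Acs ω ∈ Set.Ioo s t})
    (hsupp₁s : ∀ s t : ℝ, 0 ≤ s → s < t → 0 < μ {ω | A₁s ω ∈ Set.Ioo s t})
    (hsupp₂s : ∀ s t : ℝ, 0 ≤ s → s < t → 0 < μ {ω | A₂s ω ∈ Set.Ioo s t})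
    (Ψc Ψ₁ Ψ₂ Ψcs Ψ₁s Ψ₂s : ℝ → ℝ)
    (hΨc : ∀ x : ℝ, Ψc x = ∫ ω, Real.exp (-(Ac ω * x)) ∂μ)
    (hΨ₁ : ∀ x : ℝ, Ψ₁ x = ∫ ω, Real.exp (-(A₁ ω * x)) ∂μ)
    (hΨ₂ : ∀ x : ℝ, Ψ₂ x = ∫ ω, Real.exp (-(A₂ ω * x)) ∂μ)
    (hΨcs : ∀ x : ℝ, Ψcs x = ∫ ω, Real.exp (-(Acs ω * x)) ∂μ)
    (hΨ₁s : ∀ x : ℝ, Ψ₁s x = ∫ ω, Real.exp (-(A₁s ω * x)) ∂μ)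
    (hΨ₂s : ∀ x : ℝ, Ψ₂s x = ∫ ω, Real.exp (-(A₂s ω * x)) ∂μ)
    (hc h₁ h₂ hcs h₁s h₂s : ℝ → ℝ)
    (hhc : ∀ x : ℝ, hc x = deriv (fun s => Real.log (Ψc s)) x)
    (hh₁ : ∀ x : ℝ, h₁ x = deriv (fun s => Real.log (Ψ₁ s)) x)
    (hh₂ : ∀ x : ℝ, h₂ x = deriv (fun s => Real.log (Ψ₂ s)) x)
    (hhcs : ∀ x : ℝ, hcs x = deriv (fun s => Real.log (Ψcs s)) x)
    (hh₁s : ∀ x : ℝ, h₁s x = deriv (fun s => Real.log (Ψ₁s s)) x)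
    (hh₂s : ∀ x : ℝ, h₂s x = deriv (fun s => Real.log (Ψ₂s s)) x)
    (heq : ∀ x₁ x₂ : ℝ, 0 ≤ x₁ → 0 ≤ x₂ →
      (hc (x₁ + x₂) + h₁ x₁) * (hcs (x₁ + x₂) + h₂s x₂) =
      (hcs (x₁ + x₂) + h₁s x₁) * (hc (x₁ + x₂) + h₂ x₂)) :
    ∃ ν : ℝ, 0 < ν ∧ ∀ t : ℝ, 0 ≤ t →
      Ψc t = Ψcs t ^ ν ∧ Ψ₁ t = Ψ₁s t ^ ν ∧ Ψ₂ t = Ψ₂s t ^ ν :=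
  sara_common_identification_from_mrs_general μ Ac A₁ A₂ Acs A₁s A₂s hAc hA₁ hA₂ hAcs hA₁s hA₂s
    hposc hpos₁ hpos₂ hposcs hpos₁s hpos₂s hsuppc hsuppcs hsupp₁s hsupp₂s Ψc Ψ₁ Ψ₂ Ψcs Ψ₁s Ψ₂s hΨc
    hΨ₁ hΨ₂ hΨcs hΨ₁s hΨ₂s hc h₁ h₂ hcs h₁s h₂s hhc hh₁ hh₂ hhcs hh₁s hh₂s heq
end

section
/- Let (A₁, A₂) be a random vector with values in [0,∞)² with E[A₁] < ∞, and let x₁, x₂ ≥ 0. Suppose P(x₁ + A₁·x₂ = A₂) = 0. Then the function t ↦ E[min(t + A₁·x₂, A₂)] is differentiable at t = x₁, and its derivative there equals P(x₁ + A₁·x₂ < A₂). -/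
/-!
Each integrand `t ↦ min (t + A₁ x₂) A₂` is 1-Lipschitz, and off the null set
`{x₁ + A₁ x₂ = A₂}` it is differentiable at `x₁` with derivative `1` or `0` according as
`x₁ + A₁ x₂ < A₂` or not. Dominated differentiation under the integral, with the constant
bound `1`, turns the expected derivative into `P(x₁ + A₁ x₂ < A₂)`.
-/

open MeasureTheory Filter

theorem HasDerivAt.min_const {f : ℝ → ℝ} {f' x : ℝ} (hf : HasDerivAt f f' x) {a : ℝ}
    (hfa : f x ≠ a) : HasDerivAt (fun t => min (f t) a) (if f x < a then f' else 0) x := by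
  rcases hfa.lt_or_gt with hlt | hgt
  · rw [if_pos hlt]
    refine hf.congr_of_eventuallyEq ?_
    filter_upwards [hf.continuousAt.eventually_lt continuousAt_const hlt] with t ht
    exact min_eq_left ht.le
  · rw [if_neg hgt.not_gt]
    refine (hasDerivAt_const x a).congr_of_eventuallyEq ?_
    filter_upwards [continuousAt_const.eventually_lt hf.continuousAt hgt] with t ht
    exact min_eq_right ht.le

theorem abs_min_le_abs_of_nonneg {u v : ℝ} (hv : 0 ≤ v) : |min u v| ≤ |u| :=
  abs_le.2 ⟨le_min (neg_abs_le u) ((neg_nonpos.2 (abs_nonneg u)).trans hv),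
    (min_le_left u v).trans (le_abs_self u)⟩

namespace MeasureTheory

variable {Ω : Type*} [MeasurableSpace Ω] {μ : Measure Ω}

theorem Integrable.min_of_nonneg {f g : Ω → ℝ} (hf : Integrable f μ)
    (hg : AEStronglyMeasurable g μ) (hg_nonneg : 0 ≤ᵐ[μ] g) :
    Integrable (fun ω => min (f ω) (g ω)) μ := by
  refine hf.mono (hf.aestronglyMeasurable.inf hg) ?_
  filter_upwards [hg_nonneg] with ω hω
  simpa only [Real.norm_eq_abs] using abs_min_le_abs_of_nonneg hω

theorem hasDerivAt_integral_min_add [IsFiniteMeasure μ] {X Y : Ω → ℝ} (hX : Integrable X μ)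
    (hY : AEMeasurable Y μ) (hY_nonneg : 0 ≤ᵐ[μ] Y) {x : ℝ}
    (h_tie : μ {ω | x + X ω = Y ω} = 0) :
    HasDerivAt (fun t => ∫ ω, min (t + X ω) (Y ω) ∂μ) (μ.real {ω | x + X ω < Y ω}) x := by
  set s := {ω | x + X ω < Y ω}
  have hs : NullMeasurableSet s μ :=
    nullMeasurableSet_lt (aemeasurable_const.add hX.aemeasurable) hY
  have h_lip : ∀ ω, LipschitzWith 1 fun t : ℝ => min (t + X ω) (Y ω) := fun ω =>
    (isometry_add_right (X ω)).lipschitz.min_const (Y ω)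
  have h_deriv : ∀ᵐ ω ∂μ,
      HasDerivAt (fun t => min (t + X ω) (Y ω)) (s.indicator (fun _ => 1) ω) x := by
    filter_upwards [measure_eq_zero_iff_ae_notMem.1 h_tie] with ω hω
    simpa [Set.indicator_apply, s] using ((hasDerivAt_id x).add_const (X ω)).min_const hω
  have h_main := (hasDerivAt_integral_of_dominated_loc_of_lip
    (F := fun t ω => min (t + X ω) (Y ω)) (bound := fun _ => (1 : ℝ))
    univ_mem
    (Eventually.of_forall fun t =>
      ((integrable_const t).add hX).aestronglyMeasurable.inf hY.aestronglyMeasurable)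
    (((integrable_const x).add hX).min_of_nonneg hY.aestronglyMeasurable hY_nonneg)
    (aemeasurable_const.indicator₀ hs).aestronglyMeasurable
    (Eventually.of_forall fun ω => by simpa using h_lip ω)
    (integrable_const 1) h_deriv).2
  simpa only [integral_indicator₀ hs, setIntegral_const, smul_eq_mul, mul_one]
    using h_main

end MeasureTheory

open MeasureTheory

theorem ssf_partial_deriv_general {Ω : Type*} [MeasurableSpace Ω]
    (μ : Measure Ω) [IsProbabilityMeasure μ]
    (A₁ A₂ : Ω → ℝ) (hA₂ : Measurable A₂)
    (hpos : ∀ ω, 0 ≤ A₁ ω ∧ 0 ≤ A₂ ω)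
    (hint : Integrable A₁ μ)
    (x₁ x₂ : ℝ)
    (hnull : μ {ω | x₁ + A₁ ω * x₂ = A₂ ω} = 0) :
    HasDerivAt (fun t => ∫ ω, min (t + A₁ ω * x₂) (A₂ ω) ∂μ)
      ((μ {ω | x₁ + A₁ ω * x₂ < A₂ ω}).toReal) x₁ :=
  hasDerivAt_integral_min_add (hint.mul_const x₂) hA₂.aemeasurable
    (Eventually.of_forall fun ω => (hpos ω).2) hnull

/-- First partial derivative of the SSF utility (Section 3.1): if `(A₁,A₂)` takes values
in `[0,∞)²`, `E[A₁] < ∞`, and `P(x₁ + A₁x₂ = A₂) = 0`, then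
`t ↦ E[min(t + A₁x₂, A₂)]` is differentiable at `x₁` with derivative
`P(x₁ + A₁x₂ < A₂)`. -/
theorem ssf_partial_deriv {Ω : Type*} [MeasurableSpace Ω]
    (μ : Measure Ω) [IsProbabilityMeasure μ]
    (A₁ A₂ : Ω → ℝ) (hA₁ : Measurable A₁) (hA₂ : Measurable A₂)
    (hpos : ∀ ω, 0 ≤ A₁ ω ∧ 0 ≤ A₂ ω)
    (hint : Integrable A₁ μ)
    (x₁ x₂ : ℝ) (hx₁ : 0 ≤ x₁) (hx₂ : 0 ≤ x₂)
    (hnull : μ {ω | x₁ + A₁ ω * x₂ = A₂ ω} = 0) :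
    HasDerivAt (fun t => ∫ ω, min (t + A₁ ω * x₂) (A₂ ω) ∂μ)
      ((μ {ω | x₁ + A₁ ω * x₂ < A₂ ω}).toReal) x₁ :=
  ssf_partial_deriv_general μ A₁ A₂ hA₂ hpos hint x₁ x₂ hnull
end

section
/- Let (A₁, A₂) be a random vector with values in [0,∞)² with E[A₁] < ∞, and let p, y be real numbers. Then the function h : ℝ → ℝ defined by h(t) = E[(1 - p·A₁) · 1{t·(1 - p·A₁) + A₁·y - A₂ < 0}] is antitone (nonincreasing) on ℝ. -/
open MeasureTheory

/-! Pointwise in `ω`, the integrand is `t ↦ c · 1{t c + d < 0}` with `c = 1 - p A₁ ω`: for `c ≥ 0`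
the event shrinks as `t` grows, and for `c < 0` it grows but each point of it contributes `c < 0`.
Either way the integrand is nonincreasing in `t`, and integrating preserves this. -/

lemma antitone_ite_mul_add_neg (c d : ℝ) :
    Antitone fun t : ℝ => if t * c + d < 0 then c else 0 := by
  intro s t hst
  dsimp only
  rcases le_or_gt 0 c with hc | hc <;> split_ifs <;> first | rfl | linarith | nlinarith

section

variable {Ω : Type*} [MeasurableSpace Ω] {μ : Measure Ω}

lemma MeasureTheory.Integrable.ite_neg {E : Type*} [NormedAddCommGroup E] {f : Ω → E}
    {g : Ω → ℝ} (hf : Integrable f μ) (hg : AEMeasurable g μ) :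
    Integrable (fun ω => if g ω < 0 then f ω else 0) μ :=
  (hf.indicator₀ (nullMeasurableSet_lt hg (aemeasurable_const (b := (0 : ℝ))))).congr <|
    ae_of_all _ fun ω => by simp only [Set.indicator_apply, Set.mem_ofPred_eq]

lemma antitone_integral_of_forall_antitone {α : Type*} [Preorder α] {F : α → Ω → ℝ}
    (hF : ∀ t, Integrable (F t) μ) (hmono : ∀ ω, Antitone fun t => F t ω) :
    Antitone fun t => ∫ ω, F t ω ∂μ :=
  fun _ _ hst => integral_mono (hF _) (hF _) fun ω => hmono ω hst

end

theorem ssf_foc_antitone_general {Ω : Type*} [MeasurableSpace Ω]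
    (μ : Measure Ω) [IsProbabilityMeasure μ]
    (A₁ A₂ : Ω → ℝ) (hA₂ : Measurable A₂)
    (hint : Integrable A₁ μ)
    (p y : ℝ)
    (h : ℝ → ℝ)
    (hh : ∀ t : ℝ, h t = ∫ ω,
        (if t * (1 - p * A₁ ω) + A₁ ω * y - A₂ ω < 0 then 1 - p * A₁ ω else 0) ∂μ) :
    Antitone h := by
  have hA₁ : AEMeasurable A₁ μ := hint.aemeasurable
  have hc : Integrable (fun ω => 1 - p * A₁ ω) μ := (integrable_const 1).sub (hint.const_mul p)
  have hh' : h = fun t => ∫ ω,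
      (if t * (1 - p * A₁ ω) + (A₁ ω * y - A₂ ω) < 0 then 1 - p * A₁ ω else 0) ∂μ := by
    ext t
    simp only [hh, add_sub_assoc]
  rw [hh']
  exact antitone_integral_of_forall_antitone (fun t => hc.ite_neg (by fun_prop))
    fun ω => antitone_ite_mul_add_neg _ _

/-- Core of Proposition 4: the SSF first-order-condition function
`h(t) = E[(1 - pA₁)·1{t(1 - pA₁) + A₁y - A₂ < 0}]` is nonincreasing on `ℝ`. -/
theorem ssf_foc_antitone {Ω : Type*} [MeasurableSpace Ω]
    (μ : Measure Ω) [IsProbabilityMeasure μ]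
    (A₁ A₂ : Ω → ℝ) (hA₁ : Measurable A₁) (hA₂ : Measurable A₂)
    (hpos : ∀ ω, 0 ≤ A₁ ω ∧ 0 ≤ A₂ ω)
    (hint : Integrable A₁ μ)
    (p y : ℝ)
    (h : ℝ → ℝ)
    (hh : ∀ t : ℝ, h t = ∫ ω,
        (if t * (1 - p * A₁ ω) + A₁ ω * y - A₂ ω < 0 then 1 - p * A₁ ω else 0) ∂μ) :
    Antitone h :=
  ssf_foc_antitone_general μ A₁ A₂ hA₂ hint p y h hh
end
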